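/- arXiv:1011.3379 — 4 statements merged into one kernel-verified Lean document; each statement's English description precedes it below -/
import Mathlib

section
/- Suppose π : (0,1) → (0,∞) is twice continuously differentiable and Lebesgue integrable with ∫₀¹ π(p) dp = 1, and suppose that ∫₀¹ Gφ(p) π(p) dp = 0 for every twice continuously differentiable function φ on [0,1]. Set κᵢ := ∫₀¹ wᵢ(p) π(p) dp for i ∈ {0,1}. Then π satisfies the stationary boundary value problem: ((1/2) v π)''(p) − (μ π)'(p) − λ π(p) = 0 for all p ∈ (0,1); the limits lim_{p→0} (μπ − ((1/2)vπ)')(p) and lim_{p→1} (μπ − ((1/2)vπ)')(p) exist and equal λκ₀ and −λκ₁ respectively; and lim_{p→0} (vπ)(p) = 0 = lim_{p→1} (vπ)(p). -/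
open MeasureTheory Set Filter Topology Asymptotics

/-!
Testing the adjoint relation against smooth functions supported in `(0,1)` and integrating by
parts twice shows that `π` solves `((1/2) v π)'' - (μ π)' - λ π = 0` classically. This says that
the flux `J = μ π - ((1/2) v π)'` has the integrable derivative `-λ π`, so `J` extends continuously
to `[0,1]`, and then so does `v π`, whose derivative is `2 (μ π - J)`. The boundary values of `v π`
vanish: `v` vanishes to first order at `0` and `1`, so a nonzero limit of `v π` would force
`|π p| ≳ 1 / p` (resp. `1 / (1 - p)`), contradicting integrability. Finally, for any `C²` test
function `φ`, Lagrange's identity turns `∫ Gφ π` into the boundary term `J(1) φ(1) - J(0) φ(0)`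
plus `λ φ(0) κ₀ + λ φ(1) κ₁`; the choices `φ = 1 - p` and `φ = p` give `J(0) = λ κ₀` and
`J(1) = -λ κ₁`.
-/

/-- The infinitesimal generator of the forward jump-diffusion process (Eq. (7) of the paper). -/
noncomputable def fwdGen (lam : ℝ) (v mu w0 : ℝ → ℝ) (phi : ℝ → ℝ) (p : ℝ) : ℝ :=
  1 / 2 * v p * deriv (deriv phi) p + mu p * deriv phi p
    + lam * w0 p * (phi 0 - phi p) + lam * (1 - w0 p) * (phi 1 - phi p)

/-- Standing assumptions on the coefficients (Assumption 2.1 of the paper). -/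
structure ModelAssumptions (lam : ℝ) (v mu w0 : ℝ → ℝ) : Prop where
  lam_nonneg : 0 ≤ lam
  analytic : ∃ U : Set ℝ, IsOpen U ∧ Icc (0 : ℝ) 1 ⊆ U ∧
    AnalyticOnNhd ℝ v U ∧ AnalyticOnNhd ℝ mu U ∧ AnalyticOnNhd ℝ w0 U
  w0_mem : ∀ p ∈ Icc (0 : ℝ) 1, w0 p ∈ Icc (0 : ℝ) 1
  mu_zero_pos : 0 < mu 0
  mu_one_neg : mu 1 < 0
  v_zero : v 0 = 0
  v_one : v 1 = 0
  v_pos : ∀ p ∈ Ioo (0 : ℝ) 1, 0 < v p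
  deriv_v_zero_pos : 0 < deriv v 0
  deriv_v_one_neg : deriv v 1 < 0

/-- `pi` is a smooth, integrable, normalized, positive solution of the stationary
boundary value problem (Eq. (14) of the paper). -/
structure StationaryDensity (lam : ℝ) (v mu w0 : ℝ → ℝ) (pi : ℝ → ℝ) : Prop where
  contDiffOn : ContDiffOn ℝ 2 pi (Ioo (0 : ℝ) 1)
  pos : ∀ p ∈ Ioo (0 : ℝ) 1, 0 < pi p
  integrableOn : IntegrableOn pi (Ioo (0 : ℝ) 1)
  total_mass : (∫ p in Ioo (0 : ℝ) 1, pi p) = 1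
  ode : ∀ p ∈ Ioo (0 : ℝ) 1,
    deriv (deriv fun q => 1 / 2 * v q * pi q) p - deriv (fun q => mu q * pi q) p
      - lam * pi p = 0
  bc_zero : Tendsto (fun p => mu p * pi p - deriv (fun q => 1 / 2 * v q * pi q) p)
    (𝓝[Ioo (0 : ℝ) 1] 0) (𝓝 (lam * ∫ p in Ioo (0 : ℝ) 1, w0 p * pi p))
  bc_one : Tendsto (fun p => mu p * pi p - deriv (fun q => 1 / 2 * v q * pi q) p)
    (𝓝[Ioo (0 : ℝ) 1] 1) (𝓝 (-(lam * ∫ p in Ioo (0 : ℝ) 1, (1 - w0 p) * pi p)))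
  vpi_zero : Tendsto (fun p => v p * pi p) (𝓝[Ioo (0 : ℝ) 1] 0) (𝓝 0)
  vpi_one : Tendsto (fun p => v p * pi p) (𝓝[Ioo (0 : ℝ) 1] 1) (𝓝 0)

/-- The drift of the diffusive motion of the time-reversed process:
`μ̃(p) = −μ(p) + (vπ)'(p)/π(p)`. -/
noncomputable def bwdDrift (v mu pi : ℝ → ℝ) (p : ℝ) : ℝ :=
  -mu p + deriv (fun q => v q * pi q) p / pi p

/-- The scale density of the backward diffusive motion:
`S̃'(p) = exp(−∫_{1/2}^p 2μ̃(z)/v(z) dz)`. -/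
noncomputable def bwdScaleDensity (v mu pi : ℝ → ℝ) (p : ℝ) : ℝ :=
  Real.exp (-∫ z in (1 / 2 : ℝ)..p, 2 * bwdDrift v mu pi z / v z)

/-- The scale function of the backward diffusive motion: `S̃(p) = ∫_{1/2}^p S̃'(x) dx`. -/
noncomputable def bwdScale (v mu pi : ℝ → ℝ) (p : ℝ) : ℝ :=
  ∫ x in (1 / 2 : ℝ)..p, bwdScaleDensity v mu pi x

/-- The speed density of the backward diffusive motion: `m̃(p) = 1/(v(p)S̃'(p))`. -/
noncomputable def bwdSpeedDensity (v mu pi : ℝ → ℝ) (p : ℝ) : ℝ :=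
  1 / (v p * bwdScaleDensity v mu pi p)

open scoped ContDiff

theorem ContDiffOn.hasDerivAt_deriv {f : ℝ → ℝ} {U : Set ℝ} {x : ℝ} {n : WithTop ℕ∞}
    (hf : ContDiffOn ℝ n f U) (hn : n ≠ 0) (hU : IsOpen U) (hx : x ∈ U) :
    HasDerivAt f (deriv f x) x :=
  ((hf.contDiffAt (hU.mem_nhds hx)).differentiableAt hn).hasDerivAt

/-- Lagrange's identity; `F φ' + (M - F') φ` is the bilinear concomitant of `F ∂² + M ∂`. -/
theorem hasDerivAt_concomitant {F M φ : ℝ → ℝ} {U : Set ℝ} {x : ℝ} (hU : IsOpen U)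
    (hF : ContDiffOn ℝ 2 F U) (hM : ContDiffOn ℝ 1 M U) (hφ : ContDiffOn ℝ 2 φ U) (hx : x ∈ U) :
    HasDerivAt (fun y => F y * deriv φ y + (M y - deriv F y) * φ y)
      (F x * deriv (deriv φ) x + M x * deriv φ x - (deriv (deriv F) x - deriv M x) * φ x) x := by
  have hF' := (hF.deriv_of_isOpen hU le_rfl).hasDerivAt_deriv one_ne_zero hU hx
  have hφ' := (hφ.deriv_of_isOpen hU le_rfl).hasDerivAt_deriv one_ne_zero hU hx
  refine (((hF.hasDerivAt_deriv two_ne_zero hU hx).mul hφ').add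
    (((hM.hasDerivAt_deriv one_ne_zero hU hx).sub hF').mul (hφ.hasDerivAt_deriv two_ne_zero hU hx))
    ).congr_deriv ?_
  simp only [Pi.sub_apply]
  ring

theorem integrableOn_mul_of_tsupport_subset {c f : ℝ → ℝ} {U : Set ℝ} (hU : MeasurableSet U)
    (hc : ContinuousOn c U) (hf : Continuous f) (hfc : HasCompactSupport f)
    (hfU : tsupport f ⊆ U) : IntegrableOn (fun x => c x * f x) U := by
  refine (((hc.mono hfU).mul hf.continuousOn).integrableOn_compact hfc).of_forall_sdiff_eq_zero
    hU fun x hx => ?_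
  simp [image_eq_zero_of_notMem_tsupport hx.2]

theorem MeasureTheory.IntegrableOn.continuousOn_Icc_mul {c f : ℝ → ℝ} {a b : ℝ}
    (hf : IntegrableOn f (Ioo a b)) (hc : ContinuousOn c (Icc a b)) :
    IntegrableOn (fun x => c x * f x) (Ioo a b) :=
  (((integrableOn_Icc_iff_integrableOn_Ioo).2 hf).continuousOn_mul hc isCompact_Icc).mono_set
    Ioo_subset_Icc_self

theorem setIntegral_secondOrder_eq_setIntegral_adjoint {F M c g : ℝ → ℝ} {a b : ℝ}
    (hF : ContDiffOn ℝ 2 F (Ioo a b)) (hM : ContDiffOn ℝ 1 M (Ioo a b))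
    (hc : ContinuousOn c (Ioo a b)) (hg : ContDiff ℝ 2 g) (hgc : HasCompactSupport g)
    (hgs : tsupport g ⊆ Ioo a b) :
    ∫ x in Ioo a b, (F x * deriv (deriv g) x + M x * deriv g x + c x * g x) =
      ∫ x in Ioo a b, (deriv (deriv F) x - deriv M x + c x) * g x := by
  rcases le_or_gt b a with hba | hab
  · simp [Ioo_eq_empty_of_le hba]
  have hg' : tsupport (deriv g) ⊆ Ioo a b := tsupport_deriv_subset.trans hgs
  have hg'' : tsupport (deriv (deriv g)) ⊆ Ioo a b := tsupport_deriv_subset.trans hg'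
  have hI {k : ℝ → ℝ} (hk : ContinuousOn k (Ioo a b)) {f : ℝ → ℝ} (hf : Continuous f)
      (hfc : HasCompactSupport f) (hfs : tsupport f ⊆ Ioo a b) :=
    integrableOn_mul_of_tsupport_subset measurableSet_Ioo hk hf hfc hfs
  have hlhs : IntegrableOn (fun x => F x * deriv (deriv g) x + M x * deriv g x + c x * g x)
      (Ioo a b) :=
    ((hI hF.continuousOn ((hg.iterate_deriv' 1 1).continuous_deriv le_rfl) hgc.deriv.deriv
      hg'').add (hI hM.continuousOn (hg.continuous_deriv one_le_two) hgc.deriv hg')).add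
      (hI hc hg.continuous hgc hgs)
  have hrhs : IntegrableOn (fun x => (deriv (deriv F) x - deriv M x + c x) * g x) (Ioo a b) :=
    hI ((((hF.deriv_of_isOpen isOpen_Ioo le_rfl).continuousOn_deriv_of_isOpen
      isOpen_Ioo le_rfl).sub (hM.continuousOn_deriv_of_isOpen isOpen_Ioo le_rfl)).add hc)
      hg.continuous hgc hgs
  set B := fun y => F y * deriv g y + (M y - deriv F y) * g y
  have hB {x : ℝ} (hx : x ∉ Ioo a b) : Tendsto B (𝓝 x) (𝓝 0) := by
    refine tendsto_const_nhds.congr' ?_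
    filter_upwards [notMem_tsupport_iff_eventuallyEq.1 (fun h => hx (hgs h)),
      notMem_tsupport_iff_eventuallyEq.1 (fun h => hx (hg' h))] with y h0 h1
    simp_all [B]
  have hFTC := intervalIntegral.integral_eq_sub_of_hasDerivAt_of_tendsto hab
    (fun x hx => hasDerivAt_concomitant isOpen_Ioo hF hM hg.contDiffOn hx)
    ((intervalIntegrable_iff_integrableOn_Ioo_of_le hab.le).2 ((hlhs.sub hrhs).congr_fun
      (fun x _ => by simp only [Pi.sub_apply]; ring) measurableSet_Ioo))
    ((hB (by simp)).mono_left nhdsWithin_le_nhds) ((hB (by simp)).mono_left nhdsWithin_le_nhds)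
  rw [intervalIntegral.integral_of_le hab.le, integral_Ioc_eq_integral_Ioo, sub_self] at hFTC
  rw [← sub_eq_zero, ← integral_sub hlhs hrhs, ← hFTC]
  exact setIntegral_congr_fun measurableSet_Ioo fun x _ => by ring

theorem IsOpen.eqOn_zero_of_setIntegral_contDiff_mul_eq_zero {f : ℝ → ℝ} {U : Set ℝ}
    (hU : IsOpen U) (hf : ContinuousOn f U)
    (h : ∀ g : ℝ → ℝ, ContDiff ℝ ∞ g → HasCompactSupport g → tsupport g ⊆ U →
      ∫ x in U, g x * f x = 0) :
    EqOn f 0 U := by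
  have hae := hU.ae_eq_zero_of_integral_contDiff_smul_eq_zero (μ := volume.restrict U)
    (hf.locallyIntegrableOn hU.measurableSet) h
  refine Measure.eqOn_open_of_ae_eq (μ := volume) ?_ hU hf continuousOn_const
  filter_upwards [hae, ae_restrict_mem hU.measurableSet] with x hx hxU using hx hxU

theorem exists_continuousOn_Icc_eqOn_Ioo_of_hasDerivAt {f f' : ℝ → ℝ} {a b : ℝ} (hab : a < b)
    (hderiv : ∀ x ∈ Ioo a b, HasDerivAt f (f' x) x) (hint : IntegrableOn f' (Ioo a b)) :
    ∃ g : ℝ → ℝ, ContinuousOn g (Icc a b) ∧ EqOn f g (Ioo a b) := by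
  obtain ⟨c, hc⟩ := nonempty_Ioo.2 hab
  have hint' : IntervalIntegrable f' volume a b :=
    (intervalIntegrable_iff_integrableOn_Ioo_of_le hab.le).2 hint
  have hmem {x : ℝ} (hx : x ∈ Ioo a b) : x ∈ uIcc a b :=
    Ioo_subset_Icc_self.trans Icc_subset_uIcc hx
  refine ⟨fun x => f c + ∫ t in c..x, f' t, ?_, fun x hx => ?_⟩
  · rw [← uIcc_of_le hab.le]
    exact continuousOn_const.add (intervalIntegral.continuousOn_primitive_interval' hint' (hmem hc))
  · have hsub : uIcc c x ⊆ Ioo a b := ordConnected_Ioo.uIcc_subset hc hx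
    dsimp only
    rw [intervalIntegral.integral_eq_sub_of_hasDerivAt (fun y hy => hderiv y (hsub hy))
      (hint'.mono_set (uIcc_subset_uIcc (hmem hc) (hmem hx)))]
    ring

theorem tendsto_nhdsGT_of_eqOn_Ioo {f g : ℝ → ℝ} {a b : ℝ} (hab : a < b)
    (hg : ContinuousOn g (Icc a b)) (hfg : EqOn f g (Ioo a b)) :
    Tendsto f (𝓝[>] a) (𝓝 (g a)) := by
  rw [← nhdsWithin_Ioo_eq_nhdsGT hab]
  exact (((hg a (left_mem_Icc.2 hab.le)).mono Ioo_subset_Icc_self).tendsto).congr'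
    (eventuallyEq_nhdsWithin_of_eqOn hfg).symm

theorem tendsto_nhdsLT_of_eqOn_Ioo {f g : ℝ → ℝ} {a b : ℝ} (hab : a < b)
    (hg : ContinuousOn g (Icc a b)) (hfg : EqOn f g (Ioo a b)) :
    Tendsto f (𝓝[<] b) (𝓝 (g b)) := by
  rw [← nhdsWithin_Ioo_eq_nhdsLT hab]
  exact (((hg b (right_mem_Icc.2 hab.le)).mono Ioo_subset_Icc_self).tendsto).congr'
    (eventuallyEq_nhdsWithin_of_eqOn hfg).symm

theorem not_integrableOn_sub_inv {a : ℝ} {s : Set ℝ} (l : Filter ℝ) [NeBot l]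
    [TendstoIxxClass Icc l l] (hl : l ≤ 𝓝[≠] a) (hs : s ∈ l) :
    ¬IntegrableOn (fun x => (x - a)⁻¹) s := by
  have hlog : ∀ᶠ x in 𝓝[≠] a, HasDerivAt (fun x => Real.log (x - a)) (x - a)⁻¹ x := by
    filter_upwards [self_mem_nhdsWithin] with x hx
    simpa using ((hasDerivAt_id x).sub_const a).log (sub_ne_zero.2 hx)
  refine not_integrableOn_of_tendsto_norm_atTop_of_deriv_isBigO_filter l hs
    ((hlog.filter_mono hl).mono fun x hx => hx.differentiableAt) ?_
    ((EventuallyEq.isBigO ((hlog.filter_mono hl).mono fun x hx => hx.deriv)))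
  refine (tendsto_abs_atBot_atTop.comp (Real.tendsto_log_nhdsNE_zero.comp ?_)).mono_left hl
  rw [← sub_self a]
  exact ((hasDerivAt_id a).sub_const a).tendsto_nhdsNE one_ne_zero

/-- A nonzero limit `L` would force `|g x| ≳ 1 / |x - a|` along `l`, as `v x = O(x - a)`. -/
theorem eq_zero_of_tendsto_mul_of_integrableOn {v g : ℝ → ℝ} {a L : ℝ} {s : Set ℝ}
    (l : Filter ℝ) [NeBot l] [TendstoIxxClass Icc l l] [l.IsMeasurablyGenerated]
    (hl : l ≤ 𝓝[≠] a) (hs : s ∈ l) (hv : DifferentiableAt ℝ v a) (hva : v a = 0)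
    (hg : IntegrableOn g s) (h : Tendsto (fun x => v x * g x) l (𝓝 L)) : L = 0 := by
  by_contra hL
  have hne : ∀ᶠ x in l, v x * g x ≠ 0 := h.eventually_ne hL
  have hvO : v =O[l] fun x => x - a := by
    simpa [hva] using hv.hasDerivAt.isBigO_sub.mono (hl.trans nhdsWithin_le_nhds)
  have hinv : (fun x => (x - a)⁻¹) =O[l] fun x => (v x)⁻¹ :=
    hvO.inv_rev (hne.mono fun x hx h0 => absurd (by simp [h0]) hx)
  have hvg : (fun x => (v x)⁻¹) =O[l] g := by
    refine ((isBigO_refl g l).mul ((h.inv₀ hL).isBigO_one ℝ)).congr'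
      (hne.mono fun x hx => ?_) (by simp)
    dsimp only
    rw [mul_inv, mul_left_comm, mul_inv_cancel₀ (right_ne_zero_of_mul hx), mul_one]
  obtain ⟨t, ht, htg⟩ := (hinv.trans hvg).integrableAtFilter
    (by fun_prop : Measurable fun x => (x - a)⁻¹).stronglyMeasurable.stronglyMeasurableAtFilter
    ⟨s, hs, hg⟩
  exact not_integrableOn_sub_inv l hl ht htg

noncomputable def probabilityFlux (v mu pi : ℝ → ℝ) (p : ℝ) : ℝ :=
  mu p * pi p - deriv (fun q => 1 / 2 * v q * pi q) p

section StationaryProblem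

variable {lam : ℝ} {v mu w0 pi : ℝ → ℝ}

theorem ode_of_forall_setIntegral_fwdGen_mul_eq_zero (hv : ContDiffOn ℝ 2 v (Ioo 0 1))
    (hmu : ContDiffOn ℝ 1 mu (Ioo 0 1)) (hpi : ContDiffOn ℝ 2 pi (Ioo 0 1))
    (hadj : ∀ g : ℝ → ℝ, ContDiff ℝ ∞ g → HasCompactSupport g → tsupport g ⊆ Ioo 0 1 →
      ∫ p in Ioo (0 : ℝ) 1, fwdGen lam v mu w0 g p * pi p = 0) :
    ∀ p ∈ Ioo (0 : ℝ) 1,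
      deriv (deriv fun q => 1 / 2 * v q * pi q) p - deriv (fun q => mu q * pi q) p
        - lam * pi p = 0 := by
  have hF : ContDiffOn ℝ 2 (fun q => 1 / 2 * v q * pi q) (Ioo 0 1) :=
    (contDiffOn_const.mul hv).mul hpi
  have hM : ContDiffOn ℝ 1 (fun q => mu q * pi q) (Ioo 0 1) := hmu.mul (hpi.of_le one_le_two)
  refine isOpen_Ioo.eqOn_zero_of_setIntegral_contDiff_mul_eq_zero ?_ fun g hg hgc hgs => ?_
  · exact (((hF.deriv_of_isOpen isOpen_Ioo le_rfl).continuousOn_deriv_of_isOpen isOpen_Ioo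
      le_rfl).sub (hM.continuousOn_deriv_of_isOpen isOpen_Ioo le_rfl)).sub
      (continuousOn_const.mul hpi.continuousOn)
  have hg0 : g 0 = 0 := image_eq_zero_of_notMem_tsupport fun h => (hgs h).1.false
  have hg1 : g 1 = 0 := image_eq_zero_of_notMem_tsupport fun h => (hgs h).2.false
  calc _ = ∫ x in Ioo (0 : ℝ) 1, (deriv (deriv fun q => 1 / 2 * v q * pi q) x
          - deriv (fun q => mu q * pi q) x + -(lam * pi x)) * g x :=
        setIntegral_congr_fun measurableSet_Ioo fun x _ => by ring
    _ = ∫ x in Ioo (0 : ℝ) 1, (1 / 2 * v x * pi x * deriv (deriv g) x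
          + mu x * pi x * deriv g x + -(lam * pi x) * g x) :=
        (setIntegral_secondOrder_eq_setIntegral_adjoint hF hM
          (continuousOn_const.mul hpi.continuousOn).neg (hg.of_le (WithTop.coe_le_coe.2 le_top))
          hgc hgs).symm
    _ = ∫ x in Ioo (0 : ℝ) 1, fwdGen lam v mu w0 g x * pi x :=
        setIntegral_congr_fun measurableSet_Ioo fun x _ => by
          simp only [fwdGen, hg0, hg1]
          ring
    _ = 0 := hadj g hg hgc hgs

theorem hasDerivAt_probabilityFlux (hv : ContDiffOn ℝ 2 v (Ioo 0 1))
    (hmu : ContDiffOn ℝ 1 mu (Ioo 0 1)) (hpi : ContDiffOn ℝ 2 pi (Ioo 0 1))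
    (hode : ∀ p ∈ Ioo (0 : ℝ) 1,
      deriv (deriv fun q => 1 / 2 * v q * pi q) p - deriv (fun q => mu q * pi q) p
        - lam * pi p = 0)
    {p : ℝ} (hp : p ∈ Ioo 0 1) :
    HasDerivAt (probabilityFlux v mu pi) (-(lam * pi p)) p := by
  have hF : ContDiffOn ℝ 2 (fun q => 1 / 2 * v q * pi q) (Ioo 0 1) :=
    (contDiffOn_const.mul hv).mul hpi
  exact (((hmu.mul (hpi.of_le one_le_two)).hasDerivAt_deriv one_ne_zero isOpen_Ioo hp).sub
    ((hF.deriv_of_isOpen isOpen_Ioo le_rfl).hasDerivAt_deriv one_ne_zero isOpen_Ioo hp)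
    ).congr_deriv (by linarith [hode p hp])

theorem hasDerivAt_v_mul_pi {p : ℝ} (hv : DifferentiableAt ℝ v p)
    (hpi : DifferentiableAt ℝ pi p) :
    HasDerivAt (fun q => v q * pi q) (2 * (mu p * pi p - probabilityFlux v mu pi p)) p := by
  have hF : HasDerivAt (fun q => 1 / 2 * v q * pi q)
      (1 / 2 * deriv v p * pi p + 1 / 2 * v p * deriv pi p) p :=
    (hv.hasDerivAt.const_mul _).mul hpi.hasDerivAt
  rw [probabilityFlux, hF.deriv]
  exact (hv.hasDerivAt.mul hpi.hasDerivAt).congr_deriv (by ring)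

theorem tendsto_v_mul_pi_of_continuousOn_probabilityFlux {J : ℝ → ℝ}
    (hv : ∀ p ∈ Icc (0 : ℝ) 1, DifferentiableAt ℝ v p) (hv0 : v 0 = 0) (hv1 : v 1 = 0)
    (hmu : ContinuousOn mu (Icc 0 1)) (hpi : DifferentiableOn ℝ pi (Ioo 0 1))
    (hint : IntegrableOn pi (Ioo 0 1)) (hJ : ContinuousOn J (Icc 0 1))
    (hJeq : EqOn (probabilityFlux v mu pi) J (Ioo 0 1)) :
    Tendsto (fun p => v p * pi p) (𝓝[>] 0) (𝓝 0) ∧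
      Tendsto (fun p => v p * pi p) (𝓝[<] 1) (𝓝 0) := by
  have hflux : IntegrableOn (probabilityFlux v mu pi) (Ioo 0 1) :=
    ((hJ.integrableOn_compact isCompact_Icc).mono_set Ioo_subset_Icc_self).congr_fun
      hJeq.symm measurableSet_Ioo
  obtain ⟨W, hWc, hW⟩ := exists_continuousOn_Icc_eqOn_Ioo_of_hasDerivAt zero_lt_one
    (fun p hp => hasDerivAt_v_mul_pi (hv p (Ioo_subset_Icc_self hp))
      (hpi.differentiableAt (isOpen_Ioo.mem_nhds hp)))
    (((hint.continuousOn_Icc_mul hmu).sub hflux).const_mul 2)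
  have h0 := tendsto_nhdsGT_of_eqOn_Ioo zero_lt_one hWc hW
  have h1 := tendsto_nhdsLT_of_eqOn_Ioo zero_lt_one hWc hW
  rw [eq_zero_of_tendsto_mul_of_integrableOn _ (nhdsGT_le_nhdsNE 0)
    (Ioo_mem_nhdsGT zero_lt_one) (hv 0 (left_mem_Icc.2 zero_le_one)) hv0 hint h0] at h0
  rw [eq_zero_of_tendsto_mul_of_integrableOn _ (nhdsLT_le_nhdsNE 1)
    (Ioo_mem_nhdsLT zero_lt_one) (hv 1 (right_mem_Icc.2 zero_le_one)) hv1 hint h1] at h1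
  exact ⟨h0, h1⟩

theorem setIntegral_fwdGen_mul_eq (hv : ContDiffOn ℝ 2 v (Ioo 0 1))
    (hmu : ContDiffOn ℝ 1 mu (Ioo 0 1)) (hpi : ContDiffOn ℝ 2 pi (Ioo 0 1))
    (hode : ∀ p ∈ Ioo (0 : ℝ) 1,
      deriv (deriv fun q => 1 / 2 * v q * pi q) p - deriv (fun q => mu q * pi q) p
        - lam * pi p = 0)
    (hvc : ContinuousOn v (Icc 0 1)) (hmuc : ContinuousOn mu (Icc 0 1))
    (hw0 : ContinuousOn w0 (Icc 0 1)) (hint : IntegrableOn pi (Ioo 0 1))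
    (hvpi0 : Tendsto (fun p => v p * pi p) (𝓝[>] 0) (𝓝 0))
    (hvpi1 : Tendsto (fun p => v p * pi p) (𝓝[<] 1) (𝓝 0)) {J₀ J₁ : ℝ}
    (hJ₀ : Tendsto (probabilityFlux v mu pi) (𝓝[>] 0) (𝓝 J₀))
    (hJ₁ : Tendsto (probabilityFlux v mu pi) (𝓝[<] 1) (𝓝 J₁)) {φ : ℝ → ℝ}
    (hφ : ContDiff ℝ 2 φ) :
    ∫ p in Ioo (0 : ℝ) 1, fwdGen lam v mu w0 φ p * pi p =
      J₁ * φ 1 - J₀ * φ 0 + lam * φ 0 * (∫ p in Ioo (0 : ℝ) 1, w0 p * pi p)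
        + lam * φ 1 * ∫ p in Ioo (0 : ℝ) 1, (1 - w0 p) * pi p := by
  have hφc := hφ.continuous
  have hφ' := hφ.continuous_deriv one_le_two
  have hφ'' : Continuous (deriv (deriv φ)) := (hφ.iterate_deriv' 1 1).continuous_deriv le_rfl
  have hG := hint.continuousOn_Icc_mul (c := fwdGen lam v mu w0 φ) (by unfold fwdGen; fun_prop)
  have hw0pi := (hint.continuousOn_Icc_mul hw0).const_mul (lam * φ 0)
  have hw1pi := (hint.continuousOn_Icc_mul (c := fun p => 1 - w0 p)
    (continuousOn_const.sub hw0)).const_mul (lam * φ 1)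
  have hGw0 : IntegrableOn (fun p => fwdGen lam v mu w0 φ p * pi p - lam * φ 0 * (w0 p * pi p))
      (Ioo 0 1) := hG.sub hw0pi
  set B := fun y => 1 / 2 * v y * pi y * deriv φ y + probabilityFlux v mu pi y * φ y
  have hB (p : ℝ) (hp : p ∈ Ioo (0 : ℝ) 1) : HasDerivAt B (fwdGen lam v mu w0 φ p * pi p
      - lam * φ 0 * (w0 p * pi p) - lam * φ 1 * ((1 - w0 p) * pi p)) p :=
    (hasDerivAt_concomitant isOpen_Ioo ((contDiffOn_const.mul hv).mul hpi)
      (hmu.mul (hpi.of_le one_le_two)) hφ.contDiffOn hp).congr_deriv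
      (by simp only [fwdGen]; linear_combination (-φ p) * hode p hp)
  have hBlim {l : Filter ℝ} {x J : ℝ} (hl : l ≤ 𝓝 x)
      (hvpi : Tendsto (fun p => v p * pi p) l (𝓝 0))
      (hJ : Tendsto (probabilityFlux v mu pi) l (𝓝 J)) : Tendsto B l (𝓝 (J * φ x)) := by
    have h := ((hvpi.const_mul (1 / 2)).mul ((hφ'.tendsto x).mono_left hl)).add
      (hJ.mul ((hφ.continuous.tendsto x).mono_left hl))
    rw [mul_zero, zero_mul, zero_add] at h
    exact h.congr fun y => by simp only [B]; ring
  have hFTC := intervalIntegral.integral_eq_sub_of_hasDerivAt_of_tendsto zero_lt_one hB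
    ((intervalIntegrable_iff_integrableOn_Ioo_of_le zero_le_one).2 (hGw0.sub hw1pi))
    (hBlim nhdsWithin_le_nhds hvpi0 hJ₀) (hBlim nhdsWithin_le_nhds hvpi1 hJ₁)
  rw [intervalIntegral.integral_of_le zero_le_one, integral_Ioc_eq_integral_Ioo,
    integral_sub hGw0 hw1pi, integral_sub hG hw0pi, integral_const_mul,
    integral_const_mul] at hFTC
  linarith

end StationaryProblem

theorem stmt_0_general (lam : ℝ) (v mu w0 pi : ℝ → ℝ)
    (H : ModelAssumptions lam v mu w0)
    (hC2 : ContDiffOn ℝ 2 pi (Ioo (0 : ℝ) 1))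
    (hint : IntegrableOn pi (Ioo (0 : ℝ) 1))
    (hadj : ∀ phi : ℝ → ℝ, ContDiff ℝ 2 phi →
      (∫ p in Ioo (0 : ℝ) 1, fwdGen lam v mu w0 phi p * pi p) = 0) :
    (∀ p ∈ Ioo (0 : ℝ) 1,
      deriv (deriv fun q => 1 / 2 * v q * pi q) p - deriv (fun q => mu q * pi q) p
        - lam * pi p = 0) ∧
    Tendsto (fun p => mu p * pi p - deriv (fun q => 1 / 2 * v q * pi q) p)
      (𝓝[Ioo (0 : ℝ) 1] 0) (𝓝 (lam * ∫ p in Ioo (0 : ℝ) 1, w0 p * pi p)) ∧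
    Tendsto (fun p => mu p * pi p - deriv (fun q => 1 / 2 * v q * pi q) p)
      (𝓝[Ioo (0 : ℝ) 1] 1) (𝓝 (-(lam * ∫ p in Ioo (0 : ℝ) 1, (1 - w0 p) * pi p))) ∧
    Tendsto (fun p => v p * pi p) (𝓝[Ioo (0 : ℝ) 1] 0) (𝓝 0) ∧
    Tendsto (fun p => v p * pi p) (𝓝[Ioo (0 : ℝ) 1] 1) (𝓝 0) := by
  obtain ⟨U, hU, hIccU, hva, hmua, hw0a⟩ := H.analytic
  have hIooU : Ioo (0 : ℝ) 1 ⊆ U := Ioo_subset_Icc_self.trans hIccU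
  have hv : ContDiffOn ℝ 2 v U := hva.contDiffOn hU.uniqueDiffOn
  have hmu : ContDiffOn ℝ 1 mu U := hmua.contDiffOn hU.uniqueDiffOn
  have hode := ode_of_forall_setIntegral_fwdGen_mul_eq_zero (w0 := w0) (hv.mono hIooU)
    (hmu.mono hIooU) hC2 fun g hg _ _ => hadj g (hg.of_le (WithTop.coe_le_coe.2 le_top))
  obtain ⟨J, hJc, hJ⟩ := exists_continuousOn_Icc_eqOn_Ioo_of_hasDerivAt zero_lt_one
    (fun p hp => hasDerivAt_probabilityFlux (hv.mono hIooU) (hmu.mono hIooU) hC2 hode hp)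
    (hint.const_mul lam).neg
  obtain ⟨hvpi0, hvpi1⟩ := tendsto_v_mul_pi_of_continuousOn_probabilityFlux
    (fun p hp => (hva p (hIccU hp)).differentiableAt) H.v_zero H.v_one
    (hmu.continuousOn.mono hIccU) (hC2.differentiableOn two_ne_zero) hint hJc hJ
  have hbalance {φ : ℝ → ℝ} (hφ : ContDiff ℝ 2 φ) :=
    (setIntegral_fwdGen_mul_eq (hv.mono hIooU) (hmu.mono hIooU) hC2 hode
      (hv.continuousOn.mono hIccU) (hmu.continuousOn.mono hIccU)
      (hw0a.continuousOn.mono hIccU) hint hvpi0 hvpi1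
      (tendsto_nhdsGT_of_eqOn_Ioo zero_lt_one hJc hJ)
      (tendsto_nhdsLT_of_eqOn_Ioo zero_lt_one hJc hJ) hφ).symm.trans (hadj φ hφ)
  have hJ0 := hbalance (φ := fun p => 1 - p) (by fun_prop)
  have hJ1 := hbalance contDiff_id
  simp only [sub_self, sub_zero, id, mul_zero, mul_one, zero_mul, add_zero] at hJ0 hJ1
  rw [nhdsWithin_Ioo_eq_nhdsGT zero_lt_one, nhdsWithin_Ioo_eq_nhdsLT zero_lt_one,
    show lam * ∫ p in Ioo (0 : ℝ) 1, w0 p * pi p = J 0 by linarith,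
    show -(lam * ∫ p in Ioo (0 : ℝ) 1, (1 - w0 p) * pi p) = J 1 by linarith]
  exact ⟨hode, tendsto_nhdsGT_of_eqOn_Ioo zero_lt_one hJc hJ,
    tendsto_nhdsLT_of_eqOn_Ioo zero_lt_one hJc hJ, hvpi0, hvpi1⟩

/-- if a smooth, positive, integrable, normalized `pi` satisfies the adjoint
relation `∫ Gφ·π = 0` for all C² functions `φ`, then it solves the stationary
boundary value problem. -/
theorem stmt_0 (lam : ℝ) (v mu w0 pi : ℝ → ℝ)
    (H : ModelAssumptions lam v mu w0)
    (hC2 : ContDiffOn ℝ 2 pi (Ioo (0 : ℝ) 1))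
    (hpos : ∀ p ∈ Ioo (0 : ℝ) 1, 0 < pi p)
    (hint : IntegrableOn pi (Ioo (0 : ℝ) 1))
    (hmass : (∫ p in Ioo (0 : ℝ) 1, pi p) = 1)
    (hadj : ∀ phi : ℝ → ℝ, ContDiff ℝ 2 phi →
      (∫ p in Ioo (0 : ℝ) 1, fwdGen lam v mu w0 phi p * pi p) = 0) :
    (∀ p ∈ Ioo (0 : ℝ) 1,
      deriv (deriv fun q => 1 / 2 * v q * pi q) p - deriv (fun q => mu q * pi q) p
        - lam * pi p = 0) ∧
    Tendsto (fun p => mu p * pi p - deriv (fun q => 1 / 2 * v q * pi q) p)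
      (𝓝[Ioo (0 : ℝ) 1] 0) (𝓝 (lam * ∫ p in Ioo (0 : ℝ) 1, w0 p * pi p)) ∧
    Tendsto (fun p => mu p * pi p - deriv (fun q => 1 / 2 * v q * pi q) p)
      (𝓝[Ioo (0 : ℝ) 1] 1) (𝓝 (-(lam * ∫ p in Ioo (0 : ℝ) 1, (1 - w0 p) * pi p))) ∧
    Tendsto (fun p => v p * pi p) (𝓝[Ioo (0 : ℝ) 1] 0) (𝓝 0) ∧
    Tendsto (fun p => v p * pi p) (𝓝[Ioo (0 : ℝ) 1] 1) (𝓝 0) :=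
  stmt_0_general lam v mu w0 pi H hC2 hint hadj
end

section
/- Let π : (0,1) → [0,∞) be twice continuously differentiable, not identically zero, and satisfy ((1/2) v π)''(p) − (μ π)'(p) − λ π(p) = 0 for all p ∈ (0,1). Then π(p) > 0 for all p ∈ (0,1). -/
open MeasureTheory Set Filter Topology Asymptotics

/-!
On `(0, 1)` we have `v > 0`, so the stationary equation is a second-order linear ODE
`π'' = A π + B π'` with continuous coefficients. At a zero of the nonnegative `π` the function
attains its minimum, so `π'` vanishes there as well, and uniqueness for the equivalent first-order
system in `(π, π')` (whose right-hand side is locally uniformly Lipschitz) forces `π ≡ 0` nearby.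
The zero set of `π` is therefore open and closed in the connected interval `(0, 1)`.
-/

section Deriv

variable {𝕜 F : Type*} [NontriviallyNormedField 𝕜] [NormedAddCommGroup F] [NormedSpace 𝕜 F]
  {f : 𝕜 → F} {s : Set 𝕜} {n : WithTop ℕ∞} {x : 𝕜}

theorem ContDiffOn.hasDerivAt_of_isOpen (hf : ContDiffOn 𝕜 n f s) (hs : IsOpen s) (hn : 1 ≤ n)
    (hx : x ∈ s) : HasDerivAt f (deriv f x) x :=
  ((hf.differentiableOn (zero_lt_one.trans_le hn).ne' x hx).differentiableAt
    (hs.mem_nhds hx)).hasDerivAt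

theorem ContDiffOn.hasDerivAt_deriv_of_isOpen (hf : ContDiffOn 𝕜 n f s) (hs : IsOpen s)
    (hn : 2 ≤ n) (hx : x ∈ s) : HasDerivAt (deriv f) (deriv (deriv f) x) x :=
  (hf.deriv_of_isOpen hs (m := 1) hn).hasDerivAt_of_isOpen hs le_rfl hx

end Deriv

theorem lipschitzWith_companion (a b : ℝ) :
    LipschitzWith (max 1 (‖a‖₊ + ‖b‖₊)) fun x : ℝ × ℝ => (x.2, a * x.1 + b * x.2) := by
  have ha : LipschitzWith ‖a‖₊ fun x : ℝ × ℝ => a * x.1 := by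
    simpa [Function.comp_def] using (lipschitzWith_smul (β := ℝ) a).comp LipschitzWith.prod_fst
  have hb : LipschitzWith ‖b‖₊ fun x : ℝ × ℝ => b * x.2 := by
    simpa [Function.comp_def] using (lipschitzWith_smul (β := ℝ) b).comp LipschitzWith.prod_snd
  exact LipschitzWith.prod_snd.prodMk (ha.add hb)

section LinearODE

variable {A B f : ℝ → ℝ}

theorem eventuallyEq_zero_of_linear_ode {z : ℝ} (hA : ContinuousAt A z) (hB : ContinuousAt B z)
    (hf : ∀ᶠ t in 𝓝 z, HasDerivAt f (deriv f t) t ∧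
      HasDerivAt (deriv f) (A t * f t + B t * deriv f t) t)
    (hfz : f z = 0) (hf'z : deriv f z = 0) : f =ᶠ[𝓝 z] 0 := by
  have hK : ∀ᶠ t in 𝓝 z, LipschitzOnWith (max 1 ((‖A z‖₊ + 1) + (‖B z‖₊ + 1)))
      (fun x : ℝ × ℝ => (x.2, A t * x.1 + B t * x.2)) univ := by
    filter_upwards [hA.nnnorm.eventually (gt_mem_nhds (lt_add_one ‖A z‖₊)),
      hB.nnnorm.eventually (gt_mem_nhds (lt_add_one ‖B z‖₊))] with t hAt hBt
    exact ((lipschitzWith_companion _ _).weaken (by gcongr)).lipschitzOnWith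
  have hzero := ODE_solution_unique_of_eventually (f := fun t => (f t, deriv f t))
    (g := fun _ => 0) hK (hf.mono fun t ht => ⟨ht.1.prodMk ht.2, mem_univ _⟩)
    (Eventually.of_forall fun t =>
      ⟨(hasDerivAt_const t _).congr_deriv (by simp [Prod.mk_zero_zero]), mem_univ _⟩)
    (by simp [hfz, hf'z])
  exact hzero.fun_comp Prod.fst

theorem eqOn_zero_of_nonneg_of_linear_ode {s : Set ℝ} (hs : IsOpen s) (hs' : IsPreconnected s)
    (hA : ContinuousOn A s) (hB : ContinuousOn B s) (hf : ContDiffOn ℝ 2 f s)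
    (hode : ∀ t ∈ s, deriv (deriv f) t = A t * f t + B t * deriv f t)
    (hnonneg : ∀ t ∈ s, 0 ≤ f t) {z : ℝ} (hz : z ∈ s) (hfz : f z = 0) : EqOn f 0 s := by
  have hderiv : ∀ t ∈ s, HasDerivAt f (deriv f t) t ∧
      HasDerivAt (deriv f) (A t * f t + B t * deriv f t) t := fun t ht =>
    ⟨hf.hasDerivAt_of_isOpen hs one_le_two ht,
      hode t ht ▸ hf.hasDerivAt_deriv_of_isOpen hs le_rfl ht⟩
  have hlocal : ∀ t ∈ s, f t = 0 → f =ᶠ[𝓝 t] 0 := fun t ht hft =>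
    have hmin : IsLocalMin f t := by
      filter_upwards [hs.mem_nhds ht] with y hy
      exact hft ▸ hnonneg y hy
    eventuallyEq_zero_of_linear_ode (hA.continuousAt (hs.mem_nhds ht))
      (hB.continuousAt (hs.mem_nhds ht)) (eventually_of_mem (hs.mem_nhds ht) hderiv) hft
      hmin.deriv_eq_zero
  have hsub : s ⊆ {t | f =ᶠ[𝓝 t] 0} := by
    refine hs'.subset_of_closure_inter_subset isOpen_setOfPred_eventually_nhds
      ⟨z, hz, hlocal z hz hfz⟩ fun t ⟨htu, hts⟩ => hlocal t hts ?_
    refine tendsto_nhds_unique_of_frequently_eq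
      (hf.continuousOn.continuousAt (hs.mem_nhds hts)) tendsto_const_nhds ?_
    exact (mem_closure_iff_frequently.mp htu).mono fun y hy => hy.eq_of_nhds
  exact fun t ht => (hsub ht).eq_of_nhds

end LinearODE

theorem deriv_deriv_eq_of_stationary_ode {lam : ℝ} {v mu pi : ℝ → ℝ} {s : Set ℝ} (hs : IsOpen s)
    (hv : ContDiffOn ℝ 2 v s) (hmu : ContDiffOn ℝ 1 mu s) (hpi : ContDiffOn ℝ 2 pi s)
    {p : ℝ} (hp : p ∈ s) (hvp : v p ≠ 0)
    (hode : deriv (deriv fun q => 1 / 2 * v q * pi q) p - deriv (fun q => mu q * pi q) p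
      - lam * pi p = 0) :
    deriv (deriv pi) p = 2 / v p * (deriv mu p + lam - deriv (deriv v) p / 2) * pi p
      + 2 / v p * (mu p - deriv v p) * deriv pi p := by
  have hflux : deriv (fun q => 1 / 2 * v q * pi q)
      =ᶠ[𝓝 p] fun q => 1 / 2 * deriv v q * pi q + 1 / 2 * v q * deriv pi q := by
    filter_upwards [hs.mem_nhds hp] with q hq
    exact (((hv.hasDerivAt_of_isOpen hs one_le_two hq).const_mul (1 / 2)).mul
      (hpi.hasDerivAt_of_isOpen hs one_le_two hq)).deriv
  have hdiff : deriv (deriv fun q => 1 / 2 * v q * pi q) p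
      = 1 / 2 * deriv (deriv v) p * pi p + deriv v p * deriv pi p
        + 1 / 2 * v p * deriv (deriv pi) p := by
    rw [hflux.deriv_eq]
    have : HasDerivAt (fun q => 1 / 2 * deriv v q * pi q + 1 / 2 * v q * deriv pi q)
        (1 / 2 * deriv (deriv v) p * pi p + 1 / 2 * deriv v p * deriv pi p
          + (1 / 2 * deriv v p * deriv pi p + 1 / 2 * v p * deriv (deriv pi) p)) p :=
      (((hv.hasDerivAt_deriv_of_isOpen hs le_rfl hp).const_mul (1 / 2)).mul
      (hpi.hasDerivAt_of_isOpen hs one_le_two hp)).add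
      (((hv.hasDerivAt_of_isOpen hs one_le_two hp).const_mul (1 / 2)).mul
      (hpi.hasDerivAt_deriv_of_isOpen hs le_rfl hp))
    rw [this.deriv]
    ring
  have hdrift : deriv (fun q => mu q * pi q) p = deriv mu p * pi p + mu p * deriv pi p :=
    ((hmu.hasDerivAt_of_isOpen hs le_rfl hp).mul (hpi.hasDerivAt_of_isOpen hs one_le_two hp)).deriv
  rw [hdiff, hdrift] at hode
  field_simp
  linear_combination 2 * hode

/-- a nonnegative, not identically zero, C² solution of the stationary
ODE is strictly positive on (0,1). -/
theorem stmt_2 (lam : ℝ) (v mu w0 pi : ℝ → ℝ)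
    (H : ModelAssumptions lam v mu w0)
    (hC2 : ContDiffOn ℝ 2 pi (Ioo (0 : ℝ) 1))
    (hnonneg : ∀ p ∈ Ioo (0 : ℝ) 1, 0 ≤ pi p)
    (hne : ∃ p ∈ Ioo (0 : ℝ) 1, pi p ≠ 0)
    (hode : ∀ p ∈ Ioo (0 : ℝ) 1,
      deriv (deriv fun q => 1 / 2 * v q * pi q) p - deriv (fun q => mu q * pi q) p
        - lam * pi p = 0) :
    ∀ p ∈ Ioo (0 : ℝ) 1, 0 < pi p := by
  obtain ⟨U, -, hIccU, hvU, hmuU, -⟩ := H.analytic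
  have hIU : Ioo (0 : ℝ) 1 ⊆ U := Ioo_subset_Icc_self.trans hIccU
  have hv : ContDiffOn ℝ 2 v (Ioo 0 1) := (hvU.mono hIU).contDiffOn (uniqueDiffOn_Ioo 0 1)
  have hmu : ContDiffOn ℝ 1 mu (Ioo 0 1) := (hmuU.mono hIU).contDiffOn (uniqueDiffOn_Ioo 0 1)
  have hv0 : ∀ q ∈ Ioo (0 : ℝ) 1, v q ≠ 0 := fun q hq => (H.v_pos q hq).ne'
  have hcv := hv.continuousOn
  have hcv' := hv.continuousOn_deriv_of_isOpen isOpen_Ioo one_le_two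
  have hcv'' := (hv.deriv_of_isOpen isOpen_Ioo (m := 1) le_rfl).continuousOn_deriv_of_isOpen
    isOpen_Ioo le_rfl
  have hcmu := hmu.continuousOn
  have hcmu' := hmu.continuousOn_deriv_of_isOpen isOpen_Ioo le_rfl
  intro p hp
  refine (hnonneg p hp).lt_of_ne fun hp0 => ?_
  obtain ⟨q, hq, hq0⟩ := hne
  refine hq0 (eqOn_zero_of_nonneg_of_linear_ode isOpen_Ioo isPreconnected_Ioo ?_ ?_ hC2
    (fun t ht => deriv_deriv_eq_of_stationary_ode isOpen_Ioo hv hmu hC2 ht (hv0 t ht) (hode t ht))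
    hnonneg hp hp0.symm hq)
  · fun_prop (disch := assumption)
  · fun_prop (disch := assumption)
end

section
/- Let i ∈ {0,1} and assume 2μ(i) = v'(i) and that λwᵢ is identically zero on [0,1]. Then the limit lim_{p→i} π(p) exists and is strictly positive. -/
/-!
Let `J = μπ - ((1/2)vπ)'` be the probability flux. The equation says `J' = -λπ`, the boundary
condition together with `λwᵢ ≡ 0` says `J → 0` at `i`, and solving the definition of `J` for `π'`
gives `π' = ((2μ - v')π - 2J)/v`. Since `2μ - v'` vanishes at `i` and `v'(i) ≠ 0`, the first term
contributes a bounded amount to `(log π)'`. The flux term has a sign, which gives a one-sided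
Grönwall bound `π(t) ≤ E π(x)` for `t` between `i` and `x`; integrating `J' = -λπ` from `i` then
gives `|J(x)| ≤ λ E |x - i| π(x)`, so the flux term of `(log π)'` is bounded as well. Hence
`log π` is Lipschitz near `i`, converges, and `π` has a positive limit.
-/

open MeasureTheory Set Filter Topology Asymptotics

theorem LipschitzOnWith.exists_tendsto_nhdsWithin {α : Type*} [PseudoMetricSpace α]
    {f : α → ℝ} {s : Set α} {K : NNReal} (hf : LipschitzOnWith K f s) (a : α) :
    ∃ ℓ, Tendsto f (𝓝[s] a) (𝓝 ℓ) := by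
  obtain ⟨g, hg, hfg⟩ := hf.extend_real
  exact ⟨g a, (hg.continuous.tendsto a).mono_left nhdsWithin_le_nhds
    |>.congr' (eventuallyEq_nhdsWithin_of_eqOn hfg).symm⟩

theorem exists_tendsto_nhdsGT_of_abs_deriv_le {f f' : ℝ → ℝ} {a b B : ℝ} (hab : a < b)
    (hf : ∀ x ∈ Ioo a b, HasDerivAt f (f' x) x) (hB : ∀ x ∈ Ioo a b, |f' x| ≤ B) :
    ∃ ℓ, Tendsto f (𝓝[>] a) (𝓝 ℓ) := by
  have hlip : LipschitzOnWith B.toNNReal f (Ioo a b) :=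
    (convex_Ioo a b).lipschitzOnWith_of_nnnorm_hasDerivWithin_le
      (fun x hx => (hf x hx).hasDerivWithinAt) fun x hx => NNReal.le_toNNReal_of_coe_le (hB x hx)
  rw [← nhdsWithin_Ioo_eq_nhdsGT hab]
  exact hlip.exists_tendsto_nhdsWithin a

theorem exists_pos_tendsto_nhdsGT_of_abs_logDeriv_le {f f' : ℝ → ℝ} {a b B : ℝ} (hab : a < b)
    (hf : ∀ x ∈ Ioo a b, HasDerivAt f (f' x) x) (hpos : ∀ x ∈ Ioo a b, 0 < f x)
    (hB : ∀ x ∈ Ioo a b, |f' x / f x| ≤ B) :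
    ∃ L, 0 < L ∧ Tendsto f (𝓝[>] a) (𝓝 L) := by
  obtain ⟨ℓ, hℓ⟩ := exists_tendsto_nhdsGT_of_abs_deriv_le hab
    (fun x hx => (hf x hx).log (hpos x hx).ne') hB
  refine ⟨Real.exp ℓ, Real.exp_pos ℓ, (Real.continuous_exp.tendsto ℓ).comp hℓ |>.congr' ?_⟩
  filter_upwards [Ioo_mem_nhdsGT hab] with x hx
  exact Real.exp_log (hpos x hx)

theorem le_of_tendsto_nhdsGT_of_hasDerivAt_nonneg {g g' : ℝ → ℝ} {a x ℓ : ℝ} (hax : a < x)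
    (hg : ∀ y ∈ Ioc a x, HasDerivAt g (g' y) y) (hg' : ∀ y ∈ Ioo a x, 0 ≤ g' y)
    (hℓ : Tendsto g (𝓝[>] a) (𝓝 ℓ)) : ℓ ≤ g x := by
  have hmono : MonotoneOn g (Ioc a x) := by
    refine monotoneOn_of_hasDerivWithinAt_nonneg (f' := g') (convex_Ioc a x)
      (fun y hy => (hg y hy).continuousAt.continuousWithinAt) (fun y hy => ?_) ?_
    · rw [interior_Ioc] at hy ⊢
      exact (hg y (Ioo_subset_Ioc_self hy)).hasDerivWithinAt
    · rwa [interior_Ioc]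
  refine le_of_tendsto hℓ ?_
  filter_upwards [Ioc_mem_nhdsGT hax] with y hy
  exact hmono hy (right_mem_Ioc.mpr hax) hy.2

theorem le_mul_exp_of_neg_mul_le_deriv {f f' : ℝ → ℝ} {a b C : ℝ}
    (hf : ∀ x ∈ Ioo a b, HasDerivAt f (f' x) x) (hf' : ∀ x ∈ Ioo a b, -C * f x ≤ f' x)
    {t x : ℝ} (ht : t ∈ Ioo a b) (hx : x ∈ Ioo a b) (htx : t ≤ x) :
    f t ≤ f x * Real.exp (C * (x - t)) := by
  have hderiv : ∀ y ∈ Ioo a b, HasDerivAt (fun y => f y * Real.exp (C * y))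
      ((f' y + C * f y) * Real.exp (C * y)) y := fun y hy => by
    refine ((hf y hy).mul ((hasDerivAt_id y).const_mul C).exp).congr_deriv ?_
    simp only [id]
    ring
  have hmono : MonotoneOn (fun y => f y * Real.exp (C * y)) (Ioo a b) := by
    refine monotoneOn_of_hasDerivWithinAt_nonneg
      (f' := fun y => (f' y + C * f y) * Real.exp (C * y)) (convex_Ioo a b)
      (fun y hy => (hderiv y hy).continuousAt.continuousWithinAt) (fun y hy => ?_) fun y hy => ?_
    · rw [interior_Ioo] at hy ⊢
      exact (hderiv y hy).hasDerivWithinAt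
    · rw [interior_Ioo] at hy
      have := hf' y hy
      have := Real.exp_pos (C * y)
      nlinarith
  have := hmono ht hx htx
  rw [mul_sub, Real.exp_sub, mul_div_assoc', le_div_iff₀ (Real.exp_pos _)]
  simpa using this

theorem HasDerivAt.isBigO_sub_rev {𝕜 : Type*} [NontriviallyNormedField 𝕜] {f : 𝕜 → 𝕜}
    {f' x : 𝕜} (hf : HasDerivAt f f' x) (hf' : f' ≠ 0) :
    (fun y => y - x) =O[𝓝 x] fun y => f y - f x := by
  refine (hf.hasFDerivAt.isTheta_sub ?_).isBigO_symm
  convert (Homeomorph.mulRight₀ f' hf').isInducing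
  ext y
  simp [mul_comm]

theorem DifferentiableAt.isBigO_of_hasDerivAt_ne_zero {𝕜 F : Type*} [NontriviallyNormedField 𝕜]
    [NormedAddCommGroup F] [NormedSpace 𝕜 F] {f : 𝕜 → F} {v : 𝕜 → 𝕜} {v' x : 𝕜}
    (hf : DifferentiableAt 𝕜 f x) (hfx : f x = 0) (hv : HasDerivAt v v' x) (hvx : v x = 0)
    (hv' : v' ≠ 0) : f =O[𝓝 x] v := by
  simpa [hfx, hvx] using hf.isBigO_sub.trans (hv.isBigO_sub_rev hv')

theorem const_mul_setIntegral_mul_eq_zero {lam : ℝ} {w pi : ℝ → ℝ} {s : Set ℝ}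
    (hw : ∀ p ∈ s, lam * w p = 0) : lam * ∫ p in s, w p * pi p = 0 := by
  rw [← integral_const_mul]
  exact setIntegral_eq_zero_of_forall_eq_zero fun p hp => by rw [← mul_assoc, hw p hp, zero_mul]

section Flux

variable {lam a b C K : ℝ} {v phi pi J : ℝ → ℝ}

theorem flux_nonpos_and_neg_flux_le (hab : a < b) (hlam : 0 ≤ lam)
    (hpi : ∀ x ∈ Ioo a b, HasDerivAt pi ((phi x * pi x - 2 * J x) / v x) x)
    (hJ : ∀ x ∈ Ioo a b, HasDerivAt J (-(lam * pi x)) x) (hJa : Tendsto J (𝓝[>] a) (𝓝 0))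
    (hpos : ∀ x ∈ Ioo a b, 0 < pi x) (hv : ∀ x ∈ Ioo a b, 0 < v x)
    (hphi : ∀ x ∈ Ioo a b, |phi x| ≤ C * v x) :
    ∀ x ∈ Ioo a b, J x ≤ 0 ∧ -J x ≤ lam * Real.exp (C * (b - a)) * pi x * (x - a) := by
  obtain ⟨x₀, hx₀⟩ := nonempty_Ioo.mpr hab
  have hC : 0 ≤ C := nonneg_of_mul_nonneg_left ((abs_nonneg _).trans (hphi x₀ hx₀)) (hv x₀ hx₀)
  have hJ_nonpos : ∀ x ∈ Ioo a b, J x ≤ 0 := fun x hx => by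
    have := le_of_tendsto_nhdsGT_of_hasDerivAt_nonneg (g := fun y => -J y) hx.1
      (fun y hy => (hJ y ⟨hy.1, hy.2.trans_lt hx.2⟩).neg)
      (fun y hy => by simpa using mul_nonneg hlam (hpos y ⟨hy.1, hy.2.trans hx.2⟩).le)
      (by simpa using hJa.neg)
    simpa using this
  set E := Real.exp (C * (b - a))
  have hgrowth : ∀ t ∈ Ioo a b, ∀ x ∈ Ioo a b, t ≤ x → pi t ≤ pi x * E := by
    intro t ht x hx htx
    refine (le_mul_exp_of_neg_mul_le_deriv (C := C) hpi (fun y hy => ?_) ht hx htx).trans ?_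
    · rw [le_div_iff₀ (hv y hy)]
      have := neg_abs_le (phi y)
      nlinarith [hphi y hy, hJ_nonpos y hy, hpos y hy]
    · exact mul_le_mul_of_nonneg_left (Real.exp_le_exp.mpr
        (mul_le_mul_of_nonneg_left (by linarith [ht.1, hx.2]) hC)) (hpos x hx).le
  refine fun x hx => ⟨hJ_nonpos x hx, ?_⟩
  have := le_of_tendsto_nhdsGT_of_hasDerivAt_nonneg
    (g := fun y => J y + lam * E * pi x * y) hx.1
    (fun y hy => (hJ y ⟨hy.1, hy.2.trans_lt hx.2⟩).add ((hasDerivAt_id y).const_mul _))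
    (fun y hy => by
      have := hgrowth y ⟨hy.1, hy.2.trans hx.2⟩ x hx hy.2.le
      simp only [mul_one]
      nlinarith)
    (hJa.add (tendsto_nhdsWithin_of_tendsto_nhds ((continuous_const_mul _).tendsto a)))
  simp only [zero_add] at this
  linarith

theorem exists_pos_tendsto_nhdsGT_of_flux_Ioo (hab : a < b) (hlam : 0 ≤ lam)
    (hpi : ∀ x ∈ Ioo a b, HasDerivAt pi ((phi x * pi x - 2 * J x) / v x) x)
    (hJ : ∀ x ∈ Ioo a b, HasDerivAt J (-(lam * pi x)) x) (hJa : Tendsto J (𝓝[>] a) (𝓝 0))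
    (hpos : ∀ x ∈ Ioo a b, 0 < pi x) (hv : ∀ x ∈ Ioo a b, 0 < v x)
    (hphi : ∀ x ∈ Ioo a b, |phi x| ≤ C * v x) (hK : ∀ x ∈ Ioo a b, x - a ≤ K * v x) :
    ∃ L, 0 < L ∧ Tendsto pi (𝓝[>] a) (𝓝 L) := by
  have hflux := flux_nonpos_and_neg_flux_le hab hlam hpi hJ hJa hpos hv hphi
  set E := Real.exp (C * (b - a))
  refine exists_pos_tendsto_nhdsGT_of_abs_logDeriv_le (B := C + 2 * lam * E * K) hab hpi hpos
    fun x hx => ?_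
  have hvpi := mul_pos (hv x hx) (hpos x hx)
  rw [div_div, abs_div, abs_of_pos hvpi, div_le_iff₀ hvpi]
  have hE : 0 ≤ lam * E * pi x := by have := hpos x hx; positivity
  calc |phi x * pi x - 2 * J x| ≤ |phi x| * pi x + 2 * -J x := by
        rw [abs_le]; constructor <;> nlinarith [neg_abs_le (phi x), le_abs_self (phi x),
          hpos x hx, (hflux x hx).1]
    _ ≤ C * v x * pi x + 2 * (lam * E * pi x * (x - a)) := by
        gcongr
        · exact (hpos x hx).le
        · exact hphi x hx
        · exact (hflux x hx).2
    _ ≤ (C + 2 * lam * E * K) * (v x * pi x) := by nlinarith [hK x hx]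

theorem exists_pos_tendsto_nhdsGT_of_flux (hlam : 0 ≤ lam)
    (hpi : ∀ᶠ x in 𝓝[>] a, HasDerivAt pi ((phi x * pi x - 2 * J x) / v x) x)
    (hJ : ∀ᶠ x in 𝓝[>] a, HasDerivAt J (-(lam * pi x)) x) (hJa : Tendsto J (𝓝[>] a) (𝓝 0))
    (hpos : ∀ᶠ x in 𝓝[>] a, 0 < pi x) (hv : ∀ᶠ x in 𝓝[>] a, 0 < v x)
    (hphi : phi =O[𝓝[>] a] v) (hxv : (fun x => x - a) =O[𝓝[>] a] v) :
    ∃ L, 0 < L ∧ Tendsto pi (𝓝[>] a) (𝓝 L) := by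
  obtain ⟨C, hC⟩ := hphi.bound
  obtain ⟨K, hK⟩ := hxv.bound
  have hC' : ∀ᶠ x in 𝓝[>] a, |phi x| ≤ C * v x := (hC.and hv).mono fun x ⟨h, hvx⟩ => by
    rwa [Real.norm_eq_abs, Real.norm_eq_abs, abs_of_pos hvx] at h
  have hK' : ∀ᶠ x in 𝓝[>] a, x - a ≤ K * v x := (hK.and hv).mono fun x ⟨h, hvx⟩ => by
    rw [Real.norm_eq_abs, Real.norm_eq_abs, abs_of_pos hvx] at h
    exact (le_abs_self _).trans h
  obtain ⟨b, hab, hb⟩ := (nhdsGT_basis a).eventually_iff.mp <|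
    hpi.and <| hJ.and <| hpos.and <| hv.and <| hC'.and hK'
  exact exists_pos_tendsto_nhdsGT_of_flux_Ioo hab hlam (fun x hx => (hb hx).1)
    (fun x hx => (hb hx).2.1) hJa (fun x hx => (hb hx).2.2.1) (fun x hx => (hb hx).2.2.2.1)
    (fun x hx => (hb hx).2.2.2.2.1) (fun x hx => (hb hx).2.2.2.2.2)

theorem exists_pos_tendsto_nhdsLT_of_flux (hlam : 0 ≤ lam)
    (hpi : ∀ᶠ x in 𝓝[<] a, HasDerivAt pi ((phi x * pi x - 2 * J x) / v x) x)
    (hJ : ∀ᶠ x in 𝓝[<] a, HasDerivAt J (-(lam * pi x)) x) (hJa : Tendsto J (𝓝[<] a) (𝓝 0))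
    (hpos : ∀ᶠ x in 𝓝[<] a, 0 < pi x) (hv : ∀ᶠ x in 𝓝[<] a, 0 < v x)
    (hphi : phi =O[𝓝[<] a] v) (hxv : (fun x => x - a) =O[𝓝[<] a] v) :
    ∃ L, 0 < L ∧ Tendsto pi (𝓝[<] a) (𝓝 L) := by
  have hneg : Tendsto Neg.neg (𝓝[>] (-a)) (𝓝[<] a) := by
    simpa using tendsto_neg_nhdsGT (a := -a)
  obtain ⟨L, hL, hlim⟩ := exists_pos_tendsto_nhdsGT_of_flux (a := -a) (pi := fun x => pi (-x))
    (J := fun x => -J (-x)) (phi := fun x => -phi (-x)) (v := fun x => v (-x)) hlam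
    ((hneg.eventually hpi).mono fun x hx => (hx.comp x (hasDerivAt_neg x)).congr_deriv
      (by ring))
    ((hneg.eventually hJ).mono fun x hx => (hx.comp x (hasDerivAt_neg x)).neg.congr_deriv
      (by ring))
    (by simpa using (hJa.comp hneg).neg) (hneg.eventually hpos) (hneg.eventually hv)
    (hphi.comp_tendsto hneg).neg_left
    ((hxv.comp_tendsto hneg).neg_left.congr_left fun x => by simp; ring)
  exact ⟨L, hL, by simpa [Function.comp_def] using hlim.comp tendsto_neg_nhdsLT⟩

end Flux

noncomputable def flux (v mu pi : ℝ → ℝ) (p : ℝ) : ℝ :=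
  mu p * pi p - deriv (fun q => 1 / 2 * v q * pi q) p

theorem hasDerivAt_flux {lam p : ℝ} {v mu pi : ℝ → ℝ} {s : Set ℝ} (hs : IsOpen s) (hp : p ∈ s)
    (hv : ContDiffOn ℝ 2 v s) (hmu : DifferentiableAt ℝ mu p) (hpi : ContDiffOn ℝ 2 pi s)
    (hode : deriv (deriv fun q => 1 / 2 * v q * pi q) p - deriv (fun q => mu q * pi q) p
      - lam * pi p = 0) :
    HasDerivAt (flux v mu pi) (-(lam * pi p)) p := by
  have hdiff : ContDiffOn ℝ 1 (deriv fun q => 1 / 2 * v q * pi q) s :=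
    ((contDiffOn_const.mul hv).mul hpi).deriv_of_isOpen hs (by norm_num)
  have hmupi : HasDerivAt (fun q => mu q * pi q) (deriv (fun q => mu q * pi q) p) p :=
    (hmu.mul ((hpi.contDiffAt (hs.mem_nhds hp)).differentiableAt (by norm_num))).hasDerivAt
  have hdiffusion := ((hdiff.contDiffAt (hs.mem_nhds hp)).differentiableAt one_ne_zero).hasDerivAt
  exact (hmupi.sub hdiffusion).congr_deriv (by linarith)

theorem hasDerivAt_of_flux {p : ℝ} {v mu pi : ℝ → ℝ} (hv : DifferentiableAt ℝ v p)
    (hpi : DifferentiableAt ℝ pi p) (hvp : v p ≠ 0) :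
    HasDerivAt pi (((2 * mu p - deriv v p) * pi p - 2 * flux v mu pi p) / v p) p := by
  have hdiffusion : HasDerivAt (fun q => 1 / 2 * v q * pi q)
      (1 / 2 * deriv v p * pi p + 1 / 2 * v p * deriv pi p) p :=
    (hv.hasDerivAt.const_mul _).mul hpi.hasDerivAt
  refine hpi.hasDerivAt.congr_deriv ?_
  rw [flux, hdiffusion.deriv]
  field_simp
  ring

theorem StationaryDensity.tendsto_flux {lam : ℝ} {v mu w0 pi wi : ℝ → ℝ} {i : ℝ}
    (HP : StationaryDensity lam v mu w0 pi)
    (hwi : (i = 0 ∧ wi = w0) ∨ (i = 1 ∧ wi = fun p => 1 - w0 p))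
    (hw : ∀ p ∈ Icc (0 : ℝ) 1, lam * wi p = 0) :
    Tendsto (flux v mu pi) (𝓝[Ioo (0 : ℝ) 1] i) (𝓝 0) := by
  have hκ := const_mul_setIntegral_mul_eq_zero (pi := pi) fun p hp =>
    hw p (Ioo_subset_Icc_self hp)
  rcases hwi with ⟨rfl, rfl⟩ | ⟨rfl, rfl⟩
  · exact HP.bc_zero.mono_right (congrArg 𝓝 hκ).le
  · exact HP.bc_one.mono_right (by rw [hκ, neg_zero])

theorem StationaryDensity.hasDerivAt_and_hasDerivAt_flux {lam : ℝ} {v mu w0 pi : ℝ → ℝ}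
    (H : ModelAssumptions lam v mu w0) (HP : StationaryDensity lam v mu w0 pi) {p : ℝ}
    (hp : p ∈ Ioo (0 : ℝ) 1) :
    HasDerivAt pi (((2 * mu p - deriv v p) * pi p - 2 * flux v mu pi p) / v p) p ∧
      HasDerivAt (flux v mu pi) (-(lam * pi p)) p := by
  obtain ⟨U, -, hU, hvU, hmuU, -⟩ := H.analytic
  have hIoo : Ioo (0 : ℝ) 1 ⊆ U := Ioo_subset_Icc_self.trans hU
  exact ⟨hasDerivAt_of_flux (hvU p (hIoo hp)).differentiableAt
    ((HP.contDiffOn.contDiffAt (isOpen_Ioo.mem_nhds hp)).differentiableAt (by norm_num))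
    (H.v_pos p hp).ne',
    hasDerivAt_flux isOpen_Ioo hp ((hvU.mono hIoo).contDiffOn (uniqueDiffOn_Ioo 0 1))
      (hmuU p (hIoo hp)).differentiableAt HP.contDiffOn (HP.ode p hp)⟩

/-- if `2μ(i) = v'(i)` and `λ wᵢ ≡ 0` on [0,1], then `π` has a strictly
positive limit at the boundary point `i`. -/
theorem stmt_7 (lam : ℝ) (v mu w0 pi : ℝ → ℝ)
    (H : ModelAssumptions lam v mu w0)
    (HP : StationaryDensity lam v mu w0 pi)
    (i : ℝ) (wi : ℝ → ℝ)
    (hwi : (i = 0 ∧ wi = w0) ∨ (i = 1 ∧ wi = fun p => 1 - w0 p))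
    (hcase : 2 * mu i = deriv v i)
    (hw : ∀ p ∈ Icc (0 : ℝ) 1, lam * wi p = 0) :
    ∃ L : ℝ, 0 < L ∧ Tendsto pi (𝓝[Ioo (0 : ℝ) 1] i) (𝓝 L) := by
  obtain ⟨hi, hvi, hv'i⟩ : i ∈ Icc (0 : ℝ) 1 ∧ v i = 0 ∧ deriv v i ≠ 0 := by
    rcases hwi with ⟨rfl, -⟩ | ⟨rfl, -⟩
    · exact ⟨left_mem_Icc.2 zero_le_one, H.v_zero, H.deriv_v_zero_pos.ne'⟩
    · exact ⟨right_mem_Icc.2 zero_le_one, H.v_one, H.deriv_v_one_neg.ne⟩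
  obtain ⟨U, -, hU, hvU, hmuU, -⟩ := H.analytic
  have hvd : HasDerivAt v (deriv v i) i := (hvU i (hU hi)).differentiableAt.hasDerivAt
  have hphi : (fun p => 2 * mu p - deriv v p) =O[𝓝 i] v :=
    DifferentiableAt.isBigO_of_hasDerivAt_ne_zero
      (((hmuU i (hU hi)).differentiableAt.const_mul 2).sub (hvU.deriv i (hU hi)).differentiableAt)
      (sub_eq_zero.mpr hcase) hvd hvi hv'i
  have hxv := (differentiableAt_id.sub_const i).isBigO_of_hasDerivAt_ne_zero
    (sub_self i) hvd hvi hv'i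
  have hflux := HP.tendsto_flux hwi hw
  have hmem : ∀ᶠ p in 𝓝[Ioo (0 : ℝ) 1] i, p ∈ Ioo (0 : ℝ) 1 := self_mem_nhdsWithin
  have hode := hmem.mono fun p hp => HP.hasDerivAt_and_hasDerivAt_flux H hp
  rcases hwi with ⟨rfl, -⟩ | ⟨rfl, -⟩
  · rw [nhdsWithin_Ioo_eq_nhdsGT one_pos] at hmem hode hflux ⊢
    exact exists_pos_tendsto_nhdsGT_of_flux H.lam_nonneg (hode.mono fun _ h => h.1)
      (hode.mono fun _ h => h.2) hflux (hmem.mono HP.pos) (hmem.mono H.v_pos)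
      (hphi.mono nhdsWithin_le_nhds) (hxv.mono nhdsWithin_le_nhds)
  · rw [nhdsWithin_Ioo_eq_nhdsLT one_pos] at hmem hode hflux ⊢
    exact exists_pos_tendsto_nhdsLT_of_flux H.lam_nonneg (hode.mono fun _ h => h.1)
      (hode.mono fun _ h => h.2) hflux (hmem.mono HP.pos) (hmem.mono H.v_pos)
      (hphi.mono nhdsWithin_le_nhds) (hxv.mono nhdsWithin_le_nhds)
end

section
/- For i ∈ {0,1}, the backward scale function S̃ has a finite limit at i (that is, S̃(i) := lim_{p→i} S̃(p) exists in ℝ) if and only if either λwᵢ is not identically zero on [0,1] or 2|μ(i)| < |v'(i)|. (This is the statement that the boundary point i is accessible to the diffusion with scale function S̃ if and only if i is accessible to the forward jump-diffusion.) -/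
open MeasureTheory Set Filter Topology Asymptotics

/-!
Write `S'` for the forward scale density, `m = 1 / (v S')` for the forward speed density and
`G = μ π - ½ (v π)'` for the probability flux. The stationary equation says `G' = -λ π`, and the
boundary condition gives `G(0+) = λ κ₀`. A direct computation gives `(π/m)' = -2 S' G` and
`S̃' = c² S' / (π/m)²` with `c = (π/m)(½)`, and `S̃` has a finite limit at `0` iff `S̃'` is
integrable near `0`.

If `λ κ₀ > 0`, then `G > 0` near `0`, so `S̃'` is a bounded multiple of `(1 / (π/m))'`, the
derivative of an increasing positive function, which is integrable. If `λ κ₀ = 0`, then `G ≤ 0`,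
so `π/m` increases; comparing `π` with the speed density where `μ > 0` shows that `π/m` stays
bounded away from `0`. Hence `S̃' ≍ S' ≍ p ^ (-2 μ(0) / v'(0))`, because
`2 μ / v = 2 μ(0) / (v'(0) p)` up to a bounded error, and this power is integrable near `0` iff
`2 μ(0) < v'(0)`. Finally, `λ κ₀ > 0` iff `λ w₀ ≢ 0` because `π > 0`. The boundary `1` follows
from the reflection `p ↦ 1 - p`.
-/

theorem monotoneOn_Ioo_of_hasDerivAt_nonneg {f f' : ℝ → ℝ} {a b : ℝ}
    (hf : ∀ x ∈ Ioo a b, HasDerivAt f (f' x) x) (hf' : ∀ x ∈ Ioo a b, 0 ≤ f' x) :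
    MonotoneOn f (Ioo a b) :=
  monotoneOn_of_hasDerivWithinAt_nonneg (convex_Ioo a b)
    (fun x hx => (hf x hx).continuousAt.continuousWithinAt)
    (by simpa only [interior_Ioo] using fun x hx => (hf x hx).hasDerivWithinAt)
    (by simpa only [interior_Ioo] using hf')

theorem le_of_hasDerivAt_le_of_tendsto_nhdsGT {f g f' g' : ℝ → ℝ} {a b : ℝ}
    (hf : ∀ x ∈ Ioo a b, HasDerivAt f (f' x) x) (hg : ∀ x ∈ Ioo a b, HasDerivAt g (g' x) x)
    (hfg : ∀ x ∈ Ioo a b, f' x ≤ g' x) (hf0 : Tendsto f (𝓝[>] a) (𝓝 0))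
    (hg0 : ∀ x ∈ Ioo a b, 0 ≤ g x) {x : ℝ} (hx : x ∈ Ioo a b) : f x ≤ g x := by
  have hmono : MonotoneOn (fun y => g y - f y) (Ioo a b) :=
    monotoneOn_Ioo_of_hasDerivAt_nonneg (fun y hy => (hg y hy).sub (hf y hy))
      fun y hy => sub_nonneg.2 (hfg y hy)
  suffices f x - g x ≤ (0 : ℝ) by linarith
  refine ge_of_tendsto hf0 ?_
  filter_upwards [Ioo_mem_nhdsGT hx.1] with r hr
  have hrab : r ∈ Ioo a b := ⟨hr.1, hr.2.trans hx.2⟩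
  linarith [hmono hrab hx hr.2.le, hg0 r hrab]

theorem integrableAtFilter_nhdsGT_iff_integrableOn_Ioc {g : ℝ → ℝ} {a c : ℝ} (hac : a < c)
    (hg : ContinuousOn g (Ioc a c)) :
    IntegrableAtFilter g (𝓝[>] a) ↔ IntegrableOn g (Ioc a c) := by
  refine ⟨fun ⟨t, ht, hint⟩ => ?_, fun h => ⟨Ioc a c, Ioc_mem_nhdsGT hac, h⟩⟩
  obtain ⟨u, hau, hut⟩ := (mem_nhdsGT_iff_exists_Ioo_subset' hac).1 ht
  set b := min u c
  have hab : a < b := lt_min hau hac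
  have hIcc : IntegrableOn g (Icc b c) := (hg.mono (Icc_subset_Ioc hab le_rfl)).integrableOn_Icc
  refine ((hint.mono_set hut).union hIcc).mono_set fun x hx => ?_
  rcases lt_or_ge x b with hxb | hxb
  · exact Or.inl ⟨hx.1, hxb.trans_le (min_le_left u c)⟩
  · exact Or.inr ⟨hxb, hx.2⟩

theorem exists_tendsto_intervalIntegral_nhdsGT_iff {g : ℝ → ℝ} {a c : ℝ} (hac : a < c)
    (hg : ContinuousOn g (Ioc a c)) (hg0 : ∀ x ∈ Ioc a c, 0 ≤ g x) :
    (∃ L, Tendsto (fun p => ∫ x in c..p, g x) (𝓝[>] a) (𝓝 L)) ↔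
      IntegrableOn g (Ioc a c) := by
  constructor
  · rintro ⟨L, hL⟩
    obtain ⟨u, -, hu, hu_lim⟩ := exists_seq_strictAnti_tendsto' hac
    have hu' : Tendsto u atTop (𝓝[>] a) :=
      tendsto_nhdsWithin_iff.2 ⟨hu_lim, Eventually.of_forall fun n => (hu n).1⟩
    refine integrableOn_Ioc_of_intervalIntegral_norm_bounded_left (I := 1 - L)
      (fun n => (hg.mono (Icc_subset_Ioc (hu n).1 le_rfl)).integrableOn_Icc.mono_set
        Ioc_subset_Icc_self) hu_lim ?_
    filter_upwards [(hL.comp hu').eventually (lt_mem_nhds (sub_one_lt L))] with n hn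
    have hsub : Ioc (u n) c ⊆ Ioc a c := Ioc_subset_Ioc_left (hu n).1.le
    rw [setIntegral_congr_fun measurableSet_Ioc fun x hx => Real.norm_of_nonneg (hg0 x (hsub hx)),
      ← intervalIntegral.integral_of_le (hu n).2.le, intervalIntegral.integral_symm]
    simp only [Function.comp] at hn
    linarith
  · intro h
    have hcont := intervalIntegral.continuousOn_primitive_interval' (μ := volume)
      ((intervalIntegrable_iff_integrableOn_Ioc_of_le hac.le).2 h) right_mem_uIcc
    rw [uIcc_of_le hac.le] at hcont
    exact ⟨_, ((hcont a (left_mem_Icc.2 hac.le)).mono Ioo_subset_Icc_self).tendsto.mono_left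
      (nhdsWithin_Ioo_eq_nhdsGT hac).ge⟩

theorem integrableOn_Ioc_of_hasDerivAt_of_bddBelow {Φ g : ℝ → ℝ} {a c : ℝ} (hac : a < c)
    (hΦ : ∀ x ∈ Ioc a c, HasDerivAt Φ (g x) x) (hg : ContinuousOn g (Ioc a c))
    (hg0 : ∀ x ∈ Ioc a c, 0 ≤ g x) (hbdd : BddBelow (Φ '' Ioo a c)) :
    IntegrableOn g (Ioc a c) := by
  have hmono : MonotoneOn Φ (Ioo a c) := monotoneOn_Ioo_of_hasDerivAt_nonneg
    (fun x hx => hΦ x (Ioo_subset_Ioc_self hx)) fun x hx => hg0 x (Ioo_subset_Ioc_self hx)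
  refine (exists_tendsto_intervalIntegral_nhdsGT_iff hac hg hg0).1 ⟨_,
    ((hmono.tendsto_nhdsWithin_Ioo_right (nonempty_Ioo.2 hac) hbdd).sub_const (Φ c)).congr' ?_⟩
  filter_upwards [Ioo_mem_nhdsGT hac] with p hp
  have hsub : uIcc c p ⊆ Ioc a c := by
    rw [uIcc_of_ge hp.2.le]
    exact Icc_subset_Ioc hp.1 le_rfl
  exact (intervalIntegral.integral_eq_sub_of_hasDerivAt (fun x hx => hΦ x (hsub hx))
    ((hg.mono hsub).intervalIntegrable)).symm

theorem integrableAtFilter_rpow_nhdsGT_zero_iff {s : ℝ} :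
    IntegrableAtFilter (fun x : ℝ => x ^ s) (𝓝[>] 0) ↔ -1 < s := by
  refine ⟨fun ⟨t, ht, hint⟩ => ?_, fun h => ⟨Ioo 0 1, Ioo_mem_nhdsGT one_pos,
    (intervalIntegral.integrableOn_Ioo_rpow_iff one_pos).2 h⟩⟩
  obtain ⟨u, hu, hut⟩ := (mem_nhdsGT_iff_exists_Ioo_subset' one_pos).1 ht
  exact (intervalIntegral.integrableOn_Ioo_rpow_iff hu).1 (hint.mono_set hut)

theorem Asymptotics.IsTheta.integrableAtFilter_iff {α E F : Type*} [MeasurableSpace α]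
    [NormedAddCommGroup E] [NormedAddCommGroup F] {μ : Measure α} {l : Filter α}
    [l.IsMeasurablyGenerated] {f : α → E} {g : α → F} (h : f =Θ[l] g)
    (hf : StronglyMeasurableAtFilter f l μ) (hg : StronglyMeasurableAtFilter g l μ) :
    IntegrableAtFilter f l μ ↔ IntegrableAtFilter g l μ :=
  ⟨h.2.integrableAtFilter hg, h.1.integrableAtFilter hf⟩

theorem setIntegral_pos_iff_exists_ne_zero_of_continuousOn {α : Type*} [TopologicalSpace α]
    [MeasurableSpace α] [OpensMeasurableSpace α] {μ : Measure α} [μ.IsOpenPosMeasure]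
    {f : α → ℝ} {s : Set α} (hs : IsOpen s) (hf : ContinuousOn f s) (hf0 : ∀ x ∈ s, 0 ≤ f x)
    (hfi : IntegrableOn f s μ) :
    0 < ∫ x in s, f x ∂μ ↔ ∃ x ∈ s, f x ≠ 0 := by
  rw [setIntegral_pos_iff_support_of_nonneg_ae
    ((ae_restrict_mem hs.measurableSet).mono hf0) hfi, inter_comm]
  refine ⟨fun h => ?_, fun ⟨x, hxs, hx⟩ => ?_⟩
  · by_contra! h0
    exact h.ne' (measure_mono_null (fun x hx => hx.2 (h0 x hx.1)) measure_empty)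
  · exact (hf.isOpen_inter_preimage hs isOpen_compl_singleton).measure_pos μ ⟨x, hxs, hx⟩

theorem ContinuousOn.exists_mem_Icc_ne_zero_iff {f : ℝ → ℝ} {a b : ℝ} (hab : a < b)
    (hf : ContinuousOn f (Icc a b)) :
    (∃ x ∈ Icc a b, f x ≠ 0) ↔ ∃ x ∈ Ioo a b, f x ≠ 0 := by
  refine ⟨fun ⟨x, hx, hfx⟩ => ?_, fun ⟨x, hx, hfx⟩ => ⟨x, Ioo_subset_Icc_self hx, hfx⟩⟩
  by_contra! h0
  exact hfx (EqOn.of_subset_closure (g := 0) h0 hf continuousOn_const Ioo_subset_Icc_self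
    (closure_Ioo hab.ne).ge hx)

theorem AnalyticAt.dslope {𝕜 E : Type*} [NontriviallyNormedField 𝕜] [NormedAddCommGroup E]
    [NormedSpace 𝕜 E] {f : 𝕜 → E} {z₀ : 𝕜} (hf : AnalyticAt 𝕜 f z₀) :
    AnalyticAt 𝕜 (dslope f z₀) z₀ :=
  let ⟨_, hp⟩ := hf
  ⟨_, hp.has_fpower_series_dslope_fslope⟩

theorem isBigO_div_sub_div_sub_of_analyticAt {v μ : ℝ → ℝ} {x₀ : ℝ} (hv : AnalyticAt ℝ v x₀)
    (hμ : AnalyticAt ℝ μ x₀) (hv₀ : v x₀ = 0) (hv' : deriv v x₀ ≠ 0) :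
    (fun z => μ z / v z - μ x₀ / deriv v x₀ / (z - x₀)) =O[𝓝[≠] x₀] fun _ => (1 : ℝ) := by
  have hw₀ : dslope v x₀ x₀ ≠ 0 := by rwa [dslope_same]
  have hh₀ : μ x₀ - μ x₀ / deriv v x₀ * dslope v x₀ x₀ = 0 := by
    rw [dslope_same]; field_simp; ring
  -- `v z = (z - x₀) w z` for `w = dslope v x₀`, and the difference is
  -- `dslope (μ - c w) x₀ z / w z` with `c = μ x₀ / w x₀`
  have hg : ContinuousAt (fun z =>
      dslope (fun z => μ z - μ x₀ / deriv v x₀ * dslope v x₀ z) x₀ z / dslope v x₀ z) x₀ :=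
    (hμ.sub (analyticAt_const.mul hv.dslope)).dslope.continuousAt.div
      hv.dslope.continuousAt hw₀
  refine (hg.tendsto.mono_left nhdsWithin_le_nhds).isBigO_one ℝ |>.congr' ?_ EventuallyEq.rfl
  filter_upwards [self_mem_nhdsWithin,
    nhdsWithin_le_nhds (hv.dslope.continuousAt.eventually_ne hw₀)] with z hz hwz
  have hz' : z - x₀ ≠ 0 := sub_ne_zero.2 hz
  have hslope : dslope v x₀ z = v z / (z - x₀) := by
    rw [dslope_of_ne _ hz, slope_def_field, hv₀, sub_zero]
  rw [hslope] at hwz ⊢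
  have hvz : v z ≠ 0 := fun h => hwz (by rw [h, zero_div])
  rw [dslope_of_ne _ hz, slope_def_field, hh₀, sub_zero, hslope]
  field_simp

theorem isTheta_exp_neg_rpow_nhdsGT_zero {φ g : ℝ → ℝ} {A : ℝ}
    (hφ : ∀ᶠ x in 𝓝[>] 0, HasDerivAt φ (g x) x)
    (hg : (fun x => g x - A / x) =O[𝓝[>] 0] fun _ => (1 : ℝ)) :
    (fun x => Real.exp (-φ x)) =Θ[𝓝[>] 0] fun x => x ^ (-A) := by
  obtain ⟨M, hM⟩ := hg.bound
  obtain ⟨δ, hδ, hsub⟩ := (mem_nhdsGT_iff_exists_Ioo_subset' one_pos).1 (hφ.and hM)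
  set ψ := fun x => φ x - A * Real.log x
  have hψ : ∀ x ∈ Ioo 0 δ, HasDerivWithinAt ψ (g x - A / x) (Ioo 0 δ) x := fun x hx =>
    ((hsub hx).1.sub ((Real.hasDerivAt_log hx.1.ne').const_mul A)).hasDerivWithinAt.congr_deriv
      (by rw [div_eq_mul_inv])
  have hbound : ∀ x ∈ Ioo 0 δ, ‖g x - A / x‖ ≤ M := fun x hx => by simpa using (hsub hx).2
  have hmid : δ / 2 ∈ Ioo 0 δ := ⟨half_pos hδ, half_lt_self hδ⟩
  have hM0 : 0 ≤ M := (norm_nonneg _).trans (hbound _ hmid)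
  have hψb : ∀ x ∈ Ioo 0 δ, |ψ x| ≤ |ψ (δ / 2)| + M * δ := fun x hx => by
    have hlip := Convex.norm_image_sub_le_of_norm_hasDerivWithin_le hψ hbound (convex_Ioo 0 δ)
      hmid hx
    have hdist : |x - δ / 2| ≤ δ := by rw [abs_le]; constructor <;> linarith [hx.1, hx.2]
    rw [Real.norm_eq_abs, Real.norm_eq_abs] at hlip
    linarith [abs_sub_abs_le_abs_sub (ψ x) (ψ (δ / 2)), mul_le_mul_of_nonneg_left hdist hM0]
  have hθ : (fun x => Real.exp (-φ x)) =Θ[𝓝[>] 0] fun x => Real.exp (-(A * Real.log x)) := by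
    refine Real.isTheta_exp_comp_exp_comp.2 (isBoundedUnder_of_eventually_le
      (a := |ψ (δ / 2)| + M * δ) ?_)
    filter_upwards [Ioo_mem_nhdsGT hδ] with x hx
    rw [abs_sub_comm, sub_neg_eq_add, neg_add_eq_sub]
    exact hψb x hx
  refine hθ.trans_eventuallyEq ?_
  filter_upwards [self_mem_nhdsWithin] with x hx
  rw [Real.rpow_def_of_pos hx, mul_neg, mul_comm]

theorem tendsto_one_sub_nhdsWithin_Ioo {a b : ℝ} (hab : 1 - a = b) :
    Tendsto (fun p : ℝ => 1 - p) (𝓝[Ioo 0 1] a) (𝓝[Ioo 0 1] b) :=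
  tendsto_nhdsWithin_of_tendsto_nhds_of_eventually_within _
    (hab ▸ (continuous_sub_left 1).tendsto a |>.mono_left nhdsWithin_le_nhds)
    (eventually_nhdsWithin_of_forall fun _ => Set.Ioo.one_sub_mem)

theorem exists_tendsto_neg_comp_one_sub_iff (f : ℝ → ℝ) :
    (∃ L, Tendsto (fun p => -f (1 - p)) (𝓝[Ioo 0 1] 0) (𝓝 L)) ↔
      ∃ L, Tendsto f (𝓝[Ioo 0 1] 1) (𝓝 L) := by
  refine ⟨fun ⟨L, hL⟩ => ⟨-L, ?_⟩, fun ⟨L, hL⟩ => ⟨-L, ?_⟩⟩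
  · simpa using (hL.comp (tendsto_one_sub_nhdsWithin_Ioo (sub_self 1))).neg
  · simpa using (hL.comp (tendsto_one_sub_nhdsWithin_Ioo (sub_zero 1))).neg

theorem setIntegral_Ioo_zero_one_comp_one_sub (h : ℝ → ℝ) :
    ∫ p in Ioo (0 : ℝ) 1, h (1 - p) = ∫ p in Ioo (0 : ℝ) 1, h p := by
  simp only [← integral_Ioc_eq_integral_Ioo, ← intervalIntegral.integral_of_le zero_le_one,
    intervalIntegral.integral_comp_sub_left, sub_self, sub_zero]

theorem half_mem_Ioo_zero_one : (1 / 2 : ℝ) ∈ Ioo 0 1 := by norm_num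

noncomputable def fwdScaleDensity (v mu : ℝ → ℝ) (p : ℝ) : ℝ :=
  Real.exp (-∫ z in (1 / 2 : ℝ)..p, 2 * mu z / v z)

/-- `π` divided by the forward speed density `1 / (v S')`. -/
noncomputable def piDivSpeed (v mu pi : ℝ → ℝ) (p : ℝ) : ℝ :=
  v p * pi p * fwdScaleDensity v mu p

variable {lam : ℝ} {v mu w0 pi : ℝ → ℝ}

theorem fwdScaleDensity_pos (p : ℝ) : 0 < fwdScaleDensity v mu p := Real.exp_pos _

theorem fwdScaleDensity_half : fwdScaleDensity v mu (1 / 2) = 1 := by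
  rw [fwdScaleDensity, intervalIntegral.integral_same, neg_zero, Real.exp_zero]

theorem bwdScaleDensity_pos (p : ℝ) : 0 < bwdScaleDensity v mu pi p := Real.exp_pos _

theorem flux_eq (p : ℝ) :
    flux v mu pi p = mu p * pi p - 1 / 2 * deriv (fun q => v q * pi q) p := by
  rw [flux, ← deriv_const_mul_field]
  simp only [mul_assoc]

theorem flux_reflect (p : ℝ) :
    flux (fun p => v (1 - p)) (fun p => -mu (1 - p)) (fun p => pi (1 - p)) p =
      -flux v mu pi (1 - p) := by
  simp only [flux, deriv_comp_const_sub (fun r => 1 / 2 * v r * pi r)]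
  ring

theorem bwdScale_reflect (p : ℝ) :
    bwdScale (fun p => v (1 - p)) (fun p => -mu (1 - p)) (fun p => pi (1 - p)) p =
      -bwdScale v mu pi (1 - p) := by
  have hdrift : ∀ z, bwdDrift (fun p => v (1 - p)) (fun p => -mu (1 - p)) (fun p => pi (1 - p)) z =
      -bwdDrift v mu pi (1 - z) := fun z => by
    simp only [bwdDrift, deriv_comp_const_sub (fun r => v r * pi r)]
    ring
  have hhalf : (1 : ℝ) - 1 / 2 = 1 / 2 := by norm_num
  have hdens : ∀ x, bwdScaleDensity (fun p => v (1 - p)) (fun p => -mu (1 - p))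
      (fun p => pi (1 - p)) x = bwdScaleDensity v mu pi (1 - x) := fun x => by
    simp only [bwdScaleDensity, hdrift, mul_neg, neg_div, intervalIntegral.integral_neg, neg_neg,
      intervalIntegral.integral_comp_sub_left (fun z => 2 * bwdDrift v mu pi z / v z), hhalf]
    rw [intervalIntegral.integral_symm]
  simp only [bwdScale, hdens, intervalIntegral.integral_comp_sub_left (bwdScaleDensity v mu pi),
    hhalf]
  rw [intervalIntegral.integral_symm]

namespace ModelAssumptions

theorem analyticOnNhd_v (H : ModelAssumptions lam v mu w0) : AnalyticOnNhd ℝ v (Icc 0 1) :=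
  let ⟨_, _, hU, hv, _⟩ := H.analytic; hv.mono hU

theorem analyticOnNhd_mu (H : ModelAssumptions lam v mu w0) : AnalyticOnNhd ℝ mu (Icc 0 1) :=
  let ⟨_, _, hU, _, hmu, _⟩ := H.analytic; hmu.mono hU

theorem analyticOnNhd_w0 (H : ModelAssumptions lam v mu w0) : AnalyticOnNhd ℝ w0 (Icc 0 1) :=
  let ⟨_, _, hU, _, _, hw0⟩ := H.analytic; hw0.mono hU

theorem continuousOn_drift_div (H : ModelAssumptions lam v mu w0) :
    ContinuousOn (fun z => 2 * mu z / v z) (Ioo 0 1) :=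
  (continuousOn_const.mul (H.analyticOnNhd_mu.continuousOn.mono Ioo_subset_Icc_self)).div
    (H.analyticOnNhd_v.continuousOn.mono Ioo_subset_Icc_self) fun x hx => (H.v_pos x hx).ne'

theorem hasDerivAt_integral_drift_div (H : ModelAssumptions lam v mu w0) {x : ℝ}
    (hx : x ∈ Ioo (0 : ℝ) 1) :
    HasDerivAt (fun p => ∫ z in (1 / 2 : ℝ)..p, 2 * mu z / v z) (2 * mu x / v x) x :=
  intervalIntegral.integral_hasDerivAt_right
    ((H.continuousOn_drift_div.mono
      (ordConnected_Ioo.uIcc_subset half_mem_Ioo_zero_one hx)).intervalIntegrable)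
    (H.continuousOn_drift_div.stronglyMeasurableAtFilter isOpen_Ioo x hx)
    (H.continuousOn_drift_div.continuousAt (isOpen_Ioo.mem_nhds hx))

theorem hasDerivAt_fwdScaleDensity (H : ModelAssumptions lam v mu w0) {x : ℝ}
    (hx : x ∈ Ioo (0 : ℝ) 1) :
    HasDerivAt (fwdScaleDensity v mu) (-(2 * mu x / v x) * fwdScaleDensity v mu x) x :=
  (H.hasDerivAt_integral_drift_div hx).neg.exp.congr_deriv
    (by rw [fwdScaleDensity, Pi.neg_apply]; ring)

theorem continuousOn_fwdScaleDensity (H : ModelAssumptions lam v mu w0) :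
    ContinuousOn (fwdScaleDensity v mu) (Ioo 0 1) :=
  fun _ hx => (H.hasDerivAt_fwdScaleDensity hx).continuousAt.continuousWithinAt

theorem fwdScaleDensity_isTheta (H : ModelAssumptions lam v mu w0) :
    fwdScaleDensity v mu =Θ[𝓝[>] 0] fun x => x ^ (-(2 * mu 0 / deriv v 0)) := by
  have h0 : (0 : ℝ) ∈ Icc (0 : ℝ) 1 := left_mem_Icc.2 zero_le_one
  refine isTheta_exp_neg_rpow_nhdsGT_zero (g := fun z => 2 * mu z / v z) ?_ ?_
  · filter_upwards [Ioo_mem_nhdsGT one_pos] with x hx using H.hasDerivAt_integral_drift_div hx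
  · simpa only [sub_zero] using (isBigO_div_sub_div_sub_of_analyticAt (μ := fun z => 2 * mu z)
      (H.analyticOnNhd_v 0 h0) (analyticAt_const.mul (H.analyticOnNhd_mu 0 h0)) H.v_zero
      H.deriv_v_zero_pos.ne').mono (nhdsGT_le_nhdsNE 0)

theorem reflect (H : ModelAssumptions lam v mu w0) :
    ModelAssumptions lam (fun p => v (1 - p)) (fun p => -mu (1 - p)) (fun p => 1 - w0 (1 - p)) := by
  obtain ⟨U, hU, hIcc, hv, hmu, hw0⟩ := H.analytic
  have hr : ∀ x : ℝ, AnalyticAt ℝ (fun p : ℝ => 1 - p) x :=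
    fun _ => analyticAt_const.sub analyticAt_id
  refine ⟨H.lam_nonneg, ⟨(fun p : ℝ => 1 - p) ⁻¹' U, hU.preimage (continuous_sub_left 1),
      fun p hp => hIcc (Set.Icc.one_sub_mem hp), fun x hx => (hv _ hx).comp (hr x),
      fun x hx => ((hmu _ hx).comp (hr x)).neg,
      fun x hx => analyticAt_const.sub ((hw0 _ hx).comp (hr x))⟩,
    fun p hp => ?_, ?_, ?_, ?_, ?_, fun p hp => H.v_pos _ (Set.Ioo.one_sub_mem hp), ?_, ?_⟩
  · have := H.w0_mem _ (Set.Icc.one_sub_mem hp)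
    exact ⟨sub_nonneg.2 this.2, sub_le_self _ this.1⟩
  · simpa using H.mu_one_neg
  · simpa using H.mu_zero_pos
  · simpa using H.v_one
  · simpa using H.v_zero
  · simpa [deriv_comp_const_sub] using H.deriv_v_one_neg
  · simpa [deriv_comp_const_sub] using H.deriv_v_zero_pos

end ModelAssumptions

namespace StationaryDensity

theorem contDiffOn_vpi (H : ModelAssumptions lam v mu w0) (HP : StationaryDensity lam v mu w0 pi) :
    ContDiffOn ℝ 2 (fun q => v q * pi q) (Ioo 0 1) :=
  ((H.analyticOnNhd_v.mono Ioo_subset_Icc_self).contDiffOn (uniqueDiffOn_Ioo 0 1)).mul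
    HP.contDiffOn

theorem hasDerivAt_vpi (H : ModelAssumptions lam v mu w0) (HP : StationaryDensity lam v mu w0 pi)
    {x : ℝ} (hx : x ∈ Ioo (0 : ℝ) 1) :
    HasDerivAt (fun q => v q * pi q) (deriv (fun q => v q * pi q) x) x :=
  ((HP.contDiffOn_vpi H).contDiffAt (isOpen_Ioo.mem_nhds hx)).differentiableAt
    (by norm_num) |>.hasDerivAt

theorem continuousOn_deriv_vpi (H : ModelAssumptions lam v mu w0)
    (HP : StationaryDensity lam v mu w0 pi) :
    ContinuousOn (deriv fun q => v q * pi q) (Ioo 0 1) :=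
  (HP.contDiffOn_vpi H).continuousOn_deriv_of_isOpen isOpen_Ioo (by norm_num)

theorem vpi_pos (H : ModelAssumptions lam v mu w0) (HP : StationaryDensity lam v mu w0 pi)
    {x : ℝ} (hx : x ∈ Ioo (0 : ℝ) 1) : 0 < v x * pi x :=
  mul_pos (H.v_pos x hx) (HP.pos x hx)

theorem piDivSpeed_pos (H : ModelAssumptions lam v mu w0) (HP : StationaryDensity lam v mu w0 pi)
    {x : ℝ} (hx : x ∈ Ioo (0 : ℝ) 1) : 0 < piDivSpeed v mu pi x :=
  mul_pos (HP.vpi_pos H hx) (fwdScaleDensity_pos x)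

theorem continuousOn_flux (H : ModelAssumptions lam v mu w0)
    (HP : StationaryDensity lam v mu w0 pi) : ContinuousOn (flux v mu pi) (Ioo 0 1) := by
  simp only [funext flux_eq]
  exact ((H.analyticOnNhd_mu.continuousOn.mono Ioo_subset_Icc_self).mul
    HP.contDiffOn.continuousOn).sub (continuousOn_const.mul (HP.continuousOn_deriv_vpi H))

theorem hasDerivAt_flux (H : ModelAssumptions lam v mu w0) (HP : StationaryDensity lam v mu w0 pi)
    {x : ℝ} (hx : x ∈ Ioo (0 : ℝ) 1) : HasDerivAt (flux v mu pi) (-(lam * pi x)) x := by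
  have hnhds := isOpen_Ioo.mem_nhds hx
  have hmupi : HasDerivAt (fun q => mu q * pi q) (deriv (fun q => mu q * pi q) x) x :=
    ((H.analyticOnNhd_mu x (Ioo_subset_Icc_self hx)).differentiableAt.mul
      ((HP.contDiffOn.contDiffAt hnhds).differentiableAt (by norm_num))).hasDerivAt
  have hvpi : ContDiffOn ℝ 1 (deriv fun q => 1 / 2 * v q * pi q) (Ioo 0 1) :=
    ((contDiffOn_const.mul ((H.analyticOnNhd_v.mono Ioo_subset_Icc_self).contDiffOn
      (uniqueDiffOn_Ioo 0 1))).mul HP.contDiffOn).deriv_of_isOpen isOpen_Ioo (by norm_num)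
  refine (hmupi.sub ((hvpi.contDiffAt hnhds).differentiableAt one_ne_zero).hasDerivAt)
    |>.congr_deriv ?_
  linarith [HP.ode x hx]

theorem tendsto_flux_nhdsGT_zero (HP : StationaryDensity lam v mu w0 pi) :
    Tendsto (flux v mu pi) (𝓝[>] 0) (𝓝 (lam * ∫ p in Ioo (0 : ℝ) 1, w0 p * pi p)) := by
  rw [← nhdsWithin_Ioo_eq_nhdsGT zero_lt_one]
  exact HP.bc_zero

/-- In the natural scale `dS = S' dp` this says `G = -½ d(π/m)/dS`. -/
theorem hasDerivAt_piDivSpeed (H : ModelAssumptions lam v mu w0)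
    (HP : StationaryDensity lam v mu w0 pi) {x : ℝ} (hx : x ∈ Ioo (0 : ℝ) 1) :
    HasDerivAt (piDivSpeed v mu pi) (-2 * fwdScaleDensity v mu x * flux v mu pi x) x := by
  refine ((HP.hasDerivAt_vpi H hx).mul (H.hasDerivAt_fwdScaleDensity hx)).congr_deriv ?_
  rw [flux_eq]
  field_simp [(H.v_pos x hx).ne']
  ring

theorem continuousOn_piDivSpeed (H : ModelAssumptions lam v mu w0)
    (HP : StationaryDensity lam v mu w0 pi) : ContinuousOn (piDivSpeed v mu pi) (Ioo 0 1) :=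
  fun _ hx => (HP.hasDerivAt_piDivSpeed H hx).continuousAt.continuousWithinAt

theorem bwdScaleDensity_eq (H : ModelAssumptions lam v mu w0)
    (HP : StationaryDensity lam v mu w0 pi) {p : ℝ} (hp : p ∈ Ioo (0 : ℝ) 1) :
    bwdScaleDensity v mu pi p =
      piDivSpeed v mu pi (1 / 2) ^ 2 * fwdScaleDensity v mu p / piDivSpeed v mu pi p ^ 2 := by
  set f := fun q => v q * pi q
  -- `2 μ̃ / v = 2 f' / f - 2 μ / v` is the derivative of `log (f² S')`
  set φ := fun y => Real.log (f y) + Real.log (f y) + Real.log (fwdScaleDensity v mu y)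
  have hsub := ordConnected_Ioo.uIcc_subset half_mem_Ioo_zero_one hp
  have hφ : ∀ x ∈ uIcc (1 / 2 : ℝ) p, HasDerivAt φ (2 * bwdDrift v mu pi x / v x) x := by
    intro x hx
    have hx' := hsub hx
    have hlogf := (HP.hasDerivAt_vpi H hx').log (HP.vpi_pos H hx').ne'
    refine ((hlogf.add hlogf).add
      ((H.hasDerivAt_fwdScaleDensity hx').log (fwdScaleDensity_pos x).ne')).congr_deriv ?_
    rw [bwdDrift]
    field_simp [(H.v_pos x hx').ne', (HP.pos x hx').ne', (fwdScaleDensity_pos x).ne']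
    ring
  have hcont : ContinuousOn (fun x => 2 * bwdDrift v mu pi x / v x) (Ioo 0 1) :=
    (continuousOn_const.mul ((H.analyticOnNhd_mu.continuousOn.mono Ioo_subset_Icc_self).neg.add
      ((HP.continuousOn_deriv_vpi H).div HP.contDiffOn.continuousOn fun x hx =>
        (HP.pos x hx).ne'))).div (H.analyticOnNhd_v.continuousOn.mono Ioo_subset_Icc_self)
      fun x hx => (H.v_pos x hx).ne'
  have hexp : ∀ y ∈ Ioo (0 : ℝ) 1, Real.exp (φ y) = f y * f y * fwdScaleDensity v mu y :=
    fun y hy => by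
      have hfy : 0 < f y := HP.vpi_pos H hy
      simp only [φ, Real.exp_add, Real.exp_log hfy, Real.exp_log (fwdScaleDensity_pos y)]
  rw [bwdScaleDensity, intervalIntegral.integral_eq_sub_of_hasDerivAt hφ
    ((hcont.mono hsub).intervalIntegrable), neg_sub, Real.exp_sub, hexp _ hp,
    hexp _ half_mem_Ioo_zero_one, piDivSpeed, piDivSpeed, fwdScaleDensity_half]
  field_simp [(HP.vpi_pos H hp).ne', (fwdScaleDensity_pos p).ne']
  ring

theorem continuousOn_bwdScaleDensity (H : ModelAssumptions lam v mu w0)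
    (HP : StationaryDensity lam v mu w0 pi) :
    ContinuousOn (bwdScaleDensity v mu pi) (Ioo 0 1) :=
  ((continuousOn_const.mul H.continuousOn_fwdScaleDensity).div
    ((HP.continuousOn_piDivSpeed H).pow 2) fun _ hx =>
      pow_ne_zero 2 (HP.piDivSpeed_pos H hx).ne').congr fun _ hp => HP.bwdScaleDensity_eq H hp

theorem exists_tendsto_bwdScale_zero_iff_integrableAtFilter (H : ModelAssumptions lam v mu w0)
    (HP : StationaryDensity lam v mu w0 pi) :
    (∃ L, Tendsto (bwdScale v mu pi) (𝓝[Ioo 0 1] 0) (𝓝 L)) ↔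
      IntegrableAtFilter (bwdScaleDensity v mu pi) (𝓝[>] 0) := by
  have hcont : ContinuousOn (bwdScaleDensity v mu pi) (Ioc 0 (1 / 2)) :=
    (HP.continuousOn_bwdScaleDensity H).mono (Ioc_subset_Ioo_right (by norm_num))
  rw [nhdsWithin_Ioo_eq_nhdsGT zero_lt_one,
    integrableAtFilter_nhdsGT_iff_integrableOn_Ioc (by norm_num) hcont,
    ← exists_tendsto_intervalIntegral_nhdsGT_iff (by norm_num) hcont
      fun x _ => (bwdScaleDensity_pos x).le]
  rfl

theorem integrableOn_deriv_inv_piDivSpeed (H : ModelAssumptions lam v mu w0)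
    (HP : StationaryDensity lam v mu w0 pi) {c : ℝ} (hc : c ∈ Ioo (0 : ℝ) 1)
    (hflux : ∀ x ∈ Ioc 0 c, 0 ≤ flux v mu pi x) :
    IntegrableOn (fun x => 2 * fwdScaleDensity v mu x * flux v mu pi x / piDivSpeed v mu pi x ^ 2)
      (Ioc 0 c) := by
  have hsub : Ioc 0 c ⊆ Ioo (0 : ℝ) 1 := Ioc_subset_Ioo_right hc.2
  refine integrableOn_Ioc_of_hasDerivAt_of_bddBelow (Φ := fun x => (piDivSpeed v mu pi x)⁻¹)
    hc.1 (fun x hx => ((HP.hasDerivAt_piDivSpeed H (hsub hx)).inv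
      (HP.piDivSpeed_pos H (hsub hx)).ne').congr_deriv (by ring))
    (((continuousOn_const.mul H.continuousOn_fwdScaleDensity).mul (HP.continuousOn_flux H)).div
      ((HP.continuousOn_piDivSpeed H).pow 2) (fun _ hx => pow_ne_zero 2
        (HP.piDivSpeed_pos H hx).ne') |>.mono hsub)
    (fun x hx => div_nonneg (mul_nonneg (mul_nonneg zero_le_two (fwdScaleDensity_pos x).le)
      (hflux x hx)) (sq_nonneg _)) ⟨0, ?_⟩
  rintro _ ⟨x, hx, rfl⟩
  exact (inv_pos.2 (HP.piDivSpeed_pos H (hsub (Ioo_subset_Ioc_self hx)))).le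

/-- Near `0` the flux is at least `λ κ₀ / 2`, so `S̃'` is at most `2 (π/m)(½)² / (λ κ₀)` times the
derivative of `1 / (π/m)`. -/
theorem integrableAtFilter_bwdScaleDensity_of_pos (H : ModelAssumptions lam v mu w0)
    (HP : StationaryDensity lam v mu w0 pi) (hpos : 0 < lam * ∫ p in Ioo (0 : ℝ) 1, w0 p * pi p) :
    IntegrableAtFilter (bwdScaleDensity v mu pi) (𝓝[>] 0) := by
  set c := lam * ∫ p in Ioo (0 : ℝ) 1, w0 p * pi p
  obtain ⟨δ, hδ, hsub⟩ := (mem_nhdsGT_iff_exists_Ioo_subset' one_pos).1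
    ((HP.tendsto_flux_nhdsGT_zero.eventually (lt_mem_nhds (half_lt_self hpos))).and
      (Ioo_mem_nhdsGT one_pos))
  have hI : Ioc 0 (δ / 2) ⊆ Ioo 0 δ := Ioc_subset_Ioo_right (half_lt_self hδ)
  have hδ' : δ / 2 ∈ Ioo (0 : ℝ) 1 := (hsub (hI (right_mem_Ioc.2 (half_pos hδ)))).2
  set F := piDivSpeed v mu pi
  refine ⟨Ioc 0 (δ / 2), Ioc_mem_nhdsGT (half_pos hδ), ?_⟩
  refine ((HP.integrableOn_deriv_inv_piDivSpeed H hδ' fun x hx =>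
      ((half_pos hpos).trans (hsub (hI hx)).1).le).const_mul (F (1 / 2) ^ 2 / c)).mono'
    (((HP.continuousOn_bwdScaleDensity H).mono fun x hx => (hsub (hI hx)).2).aestronglyMeasurable
      measurableSet_Ioc)
    ((ae_restrict_mem measurableSet_Ioc).mono fun x hx => ?_)
  have hx' := hsub (hI hx)
  have hG : 1 ≤ 2 * flux v mu pi x / c := by rw [le_div_iff₀ hpos]; linarith [hx'.1]
  rw [Real.norm_of_nonneg (bwdScaleDensity_pos x).le, HP.bwdScaleDensity_eq H hx'.2]
  calc F (1 / 2) ^ 2 * fwdScaleDensity v mu x / F x ^ 2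
      = F (1 / 2) ^ 2 * fwdScaleDensity v mu x / F x ^ 2 * 1 := (mul_one _).symm
    _ ≤ F (1 / 2) ^ 2 * fwdScaleDensity v mu x / F x ^ 2 * (2 * flux v mu pi x / c) := by
      gcongr
      exact div_nonneg (mul_nonneg (sq_nonneg _) (fwdScaleDensity_pos x).le) (sq_nonneg _)
    _ = F (1 / 2) ^ 2 / c * (2 * fwdScaleDensity v mu x * flux v mu pi x / F x ^ 2) := by ring

theorem flux_nonpos (H : ModelAssumptions lam v mu w0) (HP : StationaryDensity lam v mu w0 pi)
    (h0 : lam * ∫ p in Ioo (0 : ℝ) 1, w0 p * pi p = 0) {x : ℝ} (hx : x ∈ Ioo (0 : ℝ) 1) :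
    flux v mu pi x ≤ 0 :=
  le_of_hasDerivAt_le_of_tendsto_nhdsGT (fun y hy => HP.hasDerivAt_flux H hy)
    (fun y _ => hasDerivAt_const y 0)
    (fun y hy => neg_nonpos.2 (mul_nonneg H.lam_nonneg (HP.pos y hy).le))
    (by simpa only [h0] using HP.tendsto_flux_nhdsGT_zero) (fun _ _ => le_rfl) hx

theorem monotoneOn_piDivSpeed (H : ModelAssumptions lam v mu w0)
    (HP : StationaryDensity lam v mu w0 pi) (h0 : lam * ∫ p in Ioo (0 : ℝ) 1, w0 p * pi p = 0) :
    MonotoneOn (piDivSpeed v mu pi) (Ioo 0 1) :=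
  monotoneOn_Ioo_of_hasDerivAt_nonneg (fun _ hx => HP.hasDerivAt_piDivSpeed H hx) fun x hx => by
    have := HP.flux_nonpos H h0 hx
    have := fwdScaleDensity_pos (v := v) (mu := mu) x
    nlinarith

/-- Where `μ ≥ m`, the speed density `1 / (v S')` is at most `(1 / S')' / (2 m)`; since `π/m`
increases, this bounds the mass `-G / λ` of `π` on `(0, x)`. -/
theorem neg_flux_le (H : ModelAssumptions lam v mu w0) (HP : StationaryDensity lam v mu w0 pi)
    (h0 : lam * ∫ p in Ioo (0 : ℝ) 1, w0 p * pi p = 0) {m δ : ℝ} (hm : 0 < m)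
    (hδ : δ ∈ Ioo (0 : ℝ) 1) (hmu : ∀ x ∈ Ioo 0 δ, m ≤ mu x) {x : ℝ} (hx : x ∈ Ioo 0 δ) :
    -flux v mu pi x ≤ lam * piDivSpeed v mu pi δ / (2 * m) / fwdScaleDensity v mu x := by
  set K := lam * piDivSpeed v mu pi δ / (2 * m)
  have hsub : Ioo 0 δ ⊆ Ioo (0 : ℝ) 1 := Ioo_subset_Ioo_right hδ.2.le
  have hFδ := HP.piDivSpeed_pos H hδ
  refine le_of_hasDerivAt_le_of_tendsto_nhdsGT (f := fun y => -flux v mu pi y)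
    (f' := fun y => lam * pi y) (g' := fun y => K * (2 * mu y / v y) / fwdScaleDensity v mu y)
    (fun y hy => (HP.hasDerivAt_flux H (hsub hy)).neg.congr_deriv (neg_neg _))
    (fun y hy => ((H.hasDerivAt_fwdScaleDensity (hsub hy)).inv
      (fwdScaleDensity_pos y).ne').const_mul K |>.congr_deriv ?_) (fun y hy => ?_)
    (by simpa [h0] using HP.tendsto_flux_nhdsGT_zero.neg)
    (fun y _ => div_nonneg (div_nonneg (mul_nonneg H.lam_nonneg hFδ.le) (by positivity))
      (fwdScaleDensity_pos y).le) hx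
  · field_simp [(fwdScaleDensity_pos (v := v) (mu := mu) y).ne']
  · have hy' := hsub hy
    have hvs := mul_pos (H.v_pos y hy') (fwdScaleDensity_pos (v := v) (mu := mu) y)
    have hpi : pi y = piDivSpeed v mu pi y / (v y * fwdScaleDensity v mu y) := by
      rw [piDivSpeed, mul_right_comm, mul_div_cancel_left₀ _ hvs.ne']
    calc lam * pi y ≤ lam * (piDivSpeed v mu pi δ / (v y * fwdScaleDensity v mu y)) := by
          rw [hpi]
          gcongr
          exacts [H.lam_nonneg, HP.monotoneOn_piDivSpeed H h0 hy' hδ hy.2.le]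
      _ ≤ lam * (piDivSpeed v mu pi δ / (v y * fwdScaleDensity v mu y)) * (mu y / m) :=
          le_mul_of_one_le_right (mul_nonneg H.lam_nonneg (by positivity))
            ((one_le_div hm).2 (hmu y hy))
      _ = K * (2 * mu y / v y) / fwdScaleDensity v mu y := by
          simp only [K]; field_simp

theorem half_piDivSpeed_le (H : ModelAssumptions lam v mu w0)
    (HP : StationaryDensity lam v mu w0 pi) (h0 : lam * ∫ p in Ioo (0 : ℝ) 1, w0 p * pi p = 0)
    {m δ : ℝ} (hm : 0 < m) (hδ : δ ∈ Ioo (0 : ℝ) 1) (hmu : ∀ x ∈ Ioo 0 δ, m ≤ mu x)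
    (hlam : lam * δ ≤ m / 2) {q : ℝ} (hq : q ∈ Ioo 0 δ) :
    piDivSpeed v mu pi δ / 2 ≤ piDivSpeed v mu pi q := by
  set F := piDivSpeed v mu pi
  have hIcc : Icc q δ ⊆ Ioo (0 : ℝ) 1 := Icc_subset_Ioo hq.1 hδ.2
  have hderiv : ∀ x ∈ interior (Icc q δ), deriv F x ≤ lam * F δ / m := fun x hx => by
    rw [interior_Icc] at hx
    have hx' : x ∈ Ioo 0 δ := ⟨hq.1.trans hx.1, hx.2⟩
    have hs := fwdScaleDensity_pos (v := v) (mu := mu) x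
    have hG := (le_div_iff₀ hs).1 (HP.neg_flux_le H h0 hm hδ hmu hx')
    rw [(HP.hasDerivAt_piDivSpeed H (hIcc (Ioo_subset_Icc_self hx))).deriv]
    calc -2 * fwdScaleDensity v mu x * flux v mu pi x
        = 2 * (-flux v mu pi x * fwdScaleDensity v mu x) := by ring
      _ ≤ 2 * (lam * F δ / (2 * m)) := by gcongr
      _ = lam * F δ / m := by field_simp
  have hmvt := (convex_Icc q δ).image_sub_le_mul_sub_of_deriv_le
    ((HP.continuousOn_piDivSpeed H).mono hIcc)
    (fun x hx => (HP.hasDerivAt_piDivSpeed H (hIcc (interior_subset hx))).differentiableAt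
      |>.differentiableWithinAt)
    hderiv q (left_mem_Icc.2 hq.2.le) δ (right_mem_Icc.2 hq.2.le) hq.2.le
  have : lam * F δ / m * (δ - q) ≤ F δ / 2 := by
    rw [div_mul_eq_mul_div, div_le_div_iff₀ hm two_pos]
    nlinarith [H.lam_nonneg, mul_nonneg H.lam_nonneg hq.1.le, HP.piDivSpeed_pos H hδ]
  linarith

theorem exists_pos_le_piDivSpeed (H : ModelAssumptions lam v mu w0)
    (HP : StationaryDensity lam v mu w0 pi) (h0 : lam * ∫ p in Ioo (0 : ℝ) 1, w0 p * pi p = 0) :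
    ∃ ε > 0, ∀ᶠ x in 𝓝[>] 0, ε ≤ piDivSpeed v mu pi x := by
  set m := mu 0 / 2
  have hm : 0 < m := half_pos H.mu_zero_pos
  have hmu : ∀ᶠ x in 𝓝 0, m < mu x := continuousAt_const.eventually_lt
    (H.analyticOnNhd_mu 0 (left_mem_Icc.2 zero_le_one)).continuousAt (half_lt_self H.mu_zero_pos)
  have hlam : ∀ᶠ x in 𝓝 0, lam * x < m / 2 := (continuous_const_mul lam).continuousAt.eventually_lt
    continuousAt_const (by simpa using half_pos hm)
  obtain ⟨δ₀, hδ₀, hsub⟩ := (mem_nhdsGT_iff_exists_Ioo_subset' one_pos).1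
    ((eventually_nhdsWithin_of_eventually_nhds (hmu.and hlam)).and (Ioo_mem_nhdsGT one_pos))
  have hδ : δ₀ / 2 ∈ Ioo 0 δ₀ := ⟨half_pos hδ₀, half_lt_self hδ₀⟩
  refine ⟨piDivSpeed v mu pi (δ₀ / 2) / 2, half_pos (HP.piDivSpeed_pos H (hsub hδ).2), ?_⟩
  filter_upwards [Ioo_mem_nhdsGT hδ.1] with q hq
  exact HP.half_piDivSpeed_le H h0 hm (hsub hδ).2
    (fun x hx => (hsub ⟨hx.1, hx.2.trans hδ.2⟩).1.1.le) (hsub hδ).1.2.le hq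

theorem piDivSpeed_isTheta_one (H : ModelAssumptions lam v mu w0)
    (HP : StationaryDensity lam v mu w0 pi) (h0 : lam * ∫ p in Ioo (0 : ℝ) 1, w0 p * pi p = 0) :
    piDivSpeed v mu pi =Θ[𝓝[>] 0] fun _ => (1 : ℝ) := by
  obtain ⟨ε, hε, hle⟩ := HP.exists_pos_le_piDivSpeed H h0
  refine ⟨IsBigO.of_bound (piDivSpeed v mu pi (1 / 2)) ?_, IsBigO.of_bound ε⁻¹ ?_⟩
  · filter_upwards [Ioo_mem_nhdsGT (one_half_pos (α := ℝ))] with x hx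
    have hx1 : x ∈ Ioo (0 : ℝ) 1 := ⟨hx.1, hx.2.trans one_half_lt_one⟩
    rw [norm_one, mul_one, Real.norm_of_nonneg (HP.piDivSpeed_pos H hx1).le]
    exact HP.monotoneOn_piDivSpeed H h0 hx1 half_mem_Ioo_zero_one hx.2.le
  · filter_upwards [hle] with x hx
    rw [norm_one, Real.norm_of_nonneg (hε.le.trans hx), inv_mul_eq_div, le_div_iff₀ hε, one_mul]
    exact hx

theorem bwdScaleDensity_isTheta (H : ModelAssumptions lam v mu w0)
    (HP : StationaryDensity lam v mu w0 pi) (h0 : lam * ∫ p in Ioo (0 : ℝ) 1, w0 p * pi p = 0) :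
    bwdScaleDensity v mu pi =Θ[𝓝[>] 0] fun x => x ^ (-(2 * mu 0 / deriv v 0)) := by
  have hc : piDivSpeed v mu pi (1 / 2) ^ 2 ≠ 0 :=
    pow_ne_zero 2 (HP.piDivSpeed_pos H half_mem_Ioo_zero_one).ne'
  refine EventuallyEq.trans_isTheta ?_ <|
    ((H.fwdScaleDensity_isTheta.const_mul_left hc).div ((HP.piDivSpeed_isTheta_one H h0).pow 2))
      |>.trans_eventuallyEq (Eventually.of_forall fun x => by simp)
  filter_upwards [Ioo_mem_nhdsGT one_pos] with x hx
  rw [HP.bwdScaleDensity_eq H hx]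

theorem integrableAtFilter_bwdScaleDensity_iff (H : ModelAssumptions lam v mu w0)
    (HP : StationaryDensity lam v mu w0 pi) (h0 : lam * ∫ p in Ioo (0 : ℝ) 1, w0 p * pi p = 0) :
    IntegrableAtFilter (bwdScaleDensity v mu pi) (𝓝[>] 0) ↔ 2 * mu 0 / deriv v 0 < 1 := by
  rw [(HP.bwdScaleDensity_isTheta H h0).integrableAtFilter_iff,
    integrableAtFilter_rpow_nhdsGT_zero_iff, neg_lt_neg_iff]
  · rw [← nhdsWithin_Ioo_eq_nhdsGT zero_lt_one]
    exact (HP.continuousOn_bwdScaleDensity H).stronglyMeasurableAtFilter_nhdsWithin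
      measurableSet_Ioo 0
  · exact (measurable_id.pow_const _).aestronglyMeasurable.stronglyMeasurableAtFilter

theorem exists_mul_w0_ne_zero_iff_pos (H : ModelAssumptions lam v mu w0)
    (HP : StationaryDensity lam v mu w0 pi) :
    (∃ p ∈ Icc (0 : ℝ) 1, lam * w0 p ≠ 0) ↔ 0 < lam * ∫ p in Ioo (0 : ℝ) 1, w0 p * pi p := by
  have hw0 := H.analyticOnNhd_w0.continuousOn
  have hκ : 0 < ∫ p in Ioo (0 : ℝ) 1, w0 p * pi p ↔ ∃ p ∈ Icc (0 : ℝ) 1, w0 p ≠ 0 := by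
    rw [setIntegral_pos_iff_exists_ne_zero_of_continuousOn (f := fun p => w0 p * pi p) isOpen_Ioo
      ((hw0.mono Ioo_subset_Icc_self).mul HP.contDiffOn.continuousOn)
      (fun p hp => mul_nonneg (H.w0_mem p (Ioo_subset_Icc_self hp)).1 (HP.pos p hp).le)
      (HP.integrableOn.continuousOn_mul_of_subset hw0 isCompact_Icc measurableSet_Ioo
        Ioo_subset_Icc_self), hw0.exists_mem_Icc_ne_zero_iff zero_lt_one]
    exact exists_congr fun p => and_congr_right fun hp => mul_ne_zero_iff_right (HP.pos p hp).ne'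
  refine ⟨fun ⟨p, hp, hne⟩ => ?_, fun h => ?_⟩
  · exact mul_pos (H.lam_nonneg.lt_of_ne (left_ne_zero_of_mul hne).symm)
      (hκ.2 ⟨p, hp, right_ne_zero_of_mul hne⟩)
  · obtain ⟨p, hp, hw⟩ := hκ.1 (pos_of_mul_pos_right h H.lam_nonneg)
    exact ⟨p, hp, mul_ne_zero (left_ne_zero_of_mul h.ne') hw⟩

theorem exists_tendsto_bwdScale_zero_iff (H : ModelAssumptions lam v mu w0)
    (HP : StationaryDensity lam v mu w0 pi) :
    (∃ L : ℝ, Tendsto (bwdScale v mu pi) (𝓝[Ioo (0 : ℝ) 1] 0) (𝓝 L)) ↔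
      ((∃ p ∈ Icc (0 : ℝ) 1, lam * w0 p ≠ 0) ∨ 2 * |mu 0| < |deriv v 0|) := by
  rw [HP.exists_tendsto_bwdScale_zero_iff_integrableAtFilter H, HP.exists_mul_w0_ne_zero_iff_pos H,
    abs_of_pos H.mu_zero_pos, abs_of_pos H.deriv_v_zero_pos, ← div_lt_one H.deriv_v_zero_pos]
  have hκ : 0 ≤ ∫ p in Ioo (0 : ℝ) 1, w0 p * pi p := setIntegral_nonneg measurableSet_Ioo
    fun p hp => mul_nonneg (H.w0_mem p (Ioo_subset_Icc_self hp)).1 (HP.pos p hp).le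
  rcases (mul_nonneg H.lam_nonneg hκ).lt_or_eq with hpos | h0
  · simpa only [hpos, true_or, iff_true] using HP.integrableAtFilter_bwdScaleDensity_of_pos H hpos
  · rw [← h0, lt_self_iff_false, false_or]
    exact HP.integrableAtFilter_bwdScaleDensity_iff H h0.symm

theorem reflect (HP : StationaryDensity lam v mu w0 pi) :
    StationaryDensity lam (fun p => v (1 - p)) (fun p => -mu (1 - p)) (fun p => 1 - w0 (1 - p))
      (fun p => pi (1 - p)) := by
  have hflux : flux (fun p => v (1 - p)) (fun p => -mu (1 - p)) (fun p => pi (1 - p)) =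
      fun p => -flux v mu pi (1 - p) := funext flux_reflect
  refine ⟨HP.contDiffOn.comp (contDiff_const.sub contDiff_id).contDiffOn
      fun _ => Set.Ioo.one_sub_mem, fun p hp => HP.pos _ (Set.Ioo.one_sub_mem hp), ?_, ?_,
    fun p hp => ?_, ?_, ?_, HP.vpi_one.comp (tendsto_one_sub_nhdsWithin_Ioo (sub_zero 1)),
    HP.vpi_zero.comp (tendsto_one_sub_nhdsWithin_Ioo (sub_self 1))⟩
  · have := ((intervalIntegrable_iff_integrableOn_Ioo_of_le zero_le_one).2
      HP.integrableOn).comp_sub_left 1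
    rw [sub_zero, sub_self] at this
    exact (intervalIntegrable_iff_integrableOn_Ioo_of_le zero_le_one).1 this.symm
  · rw [setIntegral_Ioo_zero_one_comp_one_sub pi, HP.total_mass]
  · simp only [funext fun x => deriv_comp_const_sub (fun r => 1 / 2 * v r * pi r) 1 x,
      neg_mul, deriv.fun_neg, deriv_comp_const_sub (deriv fun r => 1 / 2 * v r * pi r),
      deriv_comp_const_sub (fun r => mu r * pi r)]
    linarith [HP.ode _ (Set.Ioo.one_sub_mem hp)]
  · have hκ : ∫ p in Ioo (0 : ℝ) 1, (1 - w0 (1 - p)) * pi (1 - p) =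
        ∫ p in Ioo (0 : ℝ) 1, (1 - w0 p) * pi p :=
      setIntegral_Ioo_zero_one_comp_one_sub fun t => (1 - w0 t) * pi t
    show Tendsto (flux _ _ _) _ _
    rw [hflux, hκ, ← neg_neg (lam * _)]
    exact (HP.bc_one.comp (tendsto_one_sub_nhdsWithin_Ioo (sub_zero 1))).neg
  · have hκ : ∫ p in Ioo (0 : ℝ) 1, (1 - (1 - w0 (1 - p))) * pi (1 - p) =
        ∫ p in Ioo (0 : ℝ) 1, w0 p * pi p := by
      simp only [sub_sub_cancel]
      exact setIntegral_Ioo_zero_one_comp_one_sub fun t => w0 t * pi t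
    show Tendsto (flux _ _ _) _ _
    rw [hflux, hκ]
    exact (HP.bc_zero.comp (tendsto_one_sub_nhdsWithin_Ioo (sub_self 1))).neg

theorem exists_tendsto_bwdScale_one_iff (H : ModelAssumptions lam v mu w0)
    (HP : StationaryDensity lam v mu w0 pi) :
    (∃ L : ℝ, Tendsto (bwdScale v mu pi) (𝓝[Ioo (0 : ℝ) 1] 1) (𝓝 L)) ↔
      ((∃ p ∈ Icc (0 : ℝ) 1, lam * (1 - w0 p) ≠ 0) ∨ 2 * |mu 1| < |deriv v 1|) := by
  have h := HP.reflect.exists_tendsto_bwdScale_zero_iff H.reflect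
  simp only [funext bwdScale_reflect, exists_tendsto_neg_comp_one_sub_iff, deriv_comp_const_sub,
    sub_zero, abs_neg] at h
  rw [h]
  refine or_congr ⟨fun ⟨p, hp, hne⟩ => ⟨1 - p, Set.Icc.one_sub_mem hp, hne⟩,
    fun ⟨p, hp, hne⟩ => ⟨1 - p, Set.Icc.one_sub_mem hp, by rwa [sub_sub_cancel]⟩⟩ Iff.rfl

end StationaryDensity

/-- the backward scale function `S̃` has a finite limit at `i` if and
only if `λ wᵢ` is not identically zero on [0,1] or `2|μ(i)| < |v'(i)|`. -/
theorem stmt_12 (lam : ℝ) (v mu w0 pi : ℝ → ℝ)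
    (H : ModelAssumptions lam v mu w0)
    (HP : StationaryDensity lam v mu w0 pi)
    (i : ℝ) (wi : ℝ → ℝ)
    (hwi : (i = 0 ∧ wi = w0) ∨ (i = 1 ∧ wi = fun p => 1 - w0 p)) :
    (∃ L : ℝ, Tendsto (bwdScale v mu pi) (𝓝[Ioo (0 : ℝ) 1] i) (𝓝 L)) ↔
      ((∃ p ∈ Icc (0 : ℝ) 1, lam * wi p ≠ 0) ∨ 2 * |mu i| < |deriv v i|) := by
  rcases hwi with ⟨rfl, rfl⟩ | ⟨rfl, rfl⟩
  · exact HP.exists_tendsto_bwdScale_zero_iff H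
  · exact HP.exists_tendsto_bwdScale_one_iff H
end
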